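/- arXiv:2201.11917 — 9 statements merged into one kernel-verified Lean document; each statement's English description precedes it below -/
import Mathlib

section
/- Suppose W₁ + W₂ = ℝⁿ, dim(V₃ + V₄) ≤ 3Z, dim(W₁ ∩ V₃) ≥ min{Z, n−Z}, dim(W₂ ∩ V₄) ≥ min{Z, n−Z}, V₃ = (W₁ ∩ V₃) + (V₃ ∩ V₄), and V₄ = (W₂ ∩ V₄) + (V₃ ∩ V₄). Then there exist subspaces A ⊆ W₁, B ⊆ W₂, and C ⊆ ℝⁿ, each of dimension at most Z, such that A + C = V₃ and B + C = V₄. -/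
open Module Submodule

lemma exists_le_finrank_eq {K V : Type*} [Field K] [AddCommGroup V] [Module K V]
    [FiniteDimensional K V] :
    ∀ (k : ℕ) (p : Submodule K V), k ≤ Module.finrank K p →
      ∃ p' ≤ p, Module.finrank K p' = k := by
  intro k
  induction k with
  | zero => exact fun p _ => ⟨⊥, bot_le, finrank_bot K V⟩
  | succ k ih =>
    intro p hk
    obtain ⟨p', hle, hrank⟩ := ih p (Nat.le_of_succ_le hk)
    have hnle : ¬ p ≤ p' := fun h => by
      have := Submodule.finrank_mono (R := K) (M := V) h
      omega
    obtain ⟨z, hzp, hzp'⟩ := SetLike.not_le_iff_exists.mp hnle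
    have hz0 : z ≠ 0 := fun h0 => hzp' (h0 ▸ p'.zero_mem)
    refine ⟨p' ⊔ K ∙ z, sup_le hle ((Submodule.span_singleton_le_iff_mem z p).mpr hzp), ?_⟩
    have hd : p' ⊓ (K ∙ z) = ⊥ :=
      ((Submodule.disjoint_span_singleton' hz0).mpr hzp').eq_bot
    have h1 := Submodule.finrank_sup_add_finrank_inf_eq p' (K ∙ z)
    rw [hd, finrank_bot, finrank_span_singleton hz0, hrank] at h1
    omega

lemma exists_common_compl {K V : Type*} [Field K] [AddCommGroup V] [Module K V]
    [FiniteDimensional K V] (p q : Submodule K V)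
    (h : Module.finrank K p = Module.finrank K q) :
    ∃ r, IsCompl p r ∧ IsCompl q r := by
  suffices H : ∀ (k : ℕ) (p q : Submodule K V), Module.finrank K p = Module.finrank K q →
      Module.finrank K V - Module.finrank K p = k → ∃ r, IsCompl p r ∧ IsCompl q r from
    H _ p q h rfl
  intro k
  induction k using Nat.strong_induction_on with
  | _ k ih =>
  intro p q h hk
  by_cases htop : Module.finrank K p = Module.finrank K V
  · have hp : p = ⊤ := Submodule.eq_top_of_finrank_eq htop
    have hq : q = ⊤ := Submodule.eq_top_of_finrank_eq (h ▸ htop)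
    exact ⟨⊥, hp ▸ isCompl_top_bot, hq ▸ isCompl_top_bot⟩
  · have hle := Submodule.finrank_le p
    have hlt : Module.finrank K p < Module.finrank K V := lt_of_le_of_ne hle htop
    obtain ⟨z, hzp, hzq⟩ : ∃ z, z ∉ p ∧ z ∉ q := by
      by_cases hpq : p = q
      · subst hpq
        have hne : p ≠ ⊤ := fun h' => htop (by rw [h', finrank_top])
        have : ∃ z, z ∉ p := by
          by_contra h'
          push_neg at h'
          exact hne (Submodule.eq_top_iff'.mpr h')
        obtain ⟨z, hz⟩ := this
        exact ⟨z, hz, hz⟩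
      · have h1 : ¬ p ≤ q := fun hle' => hpq (Submodule.eq_of_le_of_finrank_le hle' h.ge)
        have h2 : ¬ q ≤ p := fun hle' => hpq (Submodule.eq_of_le_of_finrank_le hle' h.le).symm
        obtain ⟨x, hxp, hxq⟩ := SetLike.not_le_iff_exists.mp h1
        obtain ⟨y, hyq, hyp⟩ := SetLike.not_le_iff_exists.mp h2
        refine ⟨x + y, fun hc => hyp ?_, fun hc => hxq ?_⟩
        · simpa using p.sub_mem hc hxp
        · simpa using q.sub_mem hc hyq
    have hz0 : z ≠ 0 := fun h0 => hzp (h0 ▸ p.zero_mem)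
    have hrank : ∀ (s : Submodule K V), z ∉ s →
        Module.finrank K ↥(s ⊔ K ∙ z) = Module.finrank K s + 1 := by
      intro s hzs
      have hd : s ⊓ (K ∙ z) = ⊥ :=
        ((Submodule.disjoint_span_singleton' hz0).mpr hzs).eq_bot
      have h1 := Submodule.finrank_sup_add_finrank_inf_eq s (K ∙ z)
      rw [hd, finrank_bot, finrank_span_singleton hz0] at h1
      omega
    have hp' := hrank p hzp
    have hq' := hrank q hzq
    obtain ⟨r', hr'p, hr'q⟩ := ih (k - 1) (by omega) (p ⊔ K ∙ z) (q ⊔ K ∙ z)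
      (by rw [hp', hq', h]) (by omega)
    have key : ∀ (s : Submodule K V), z ∉ s → IsCompl (s ⊔ K ∙ z) r' →
        IsCompl s (r' ⊔ K ∙ z) := by
      intro s hzs hc
      constructor
      · rw [disjoint_iff, eq_bot_iff]
        intro x hx
        obtain ⟨hxs, hxr⟩ := Submodule.mem_inf.mp hx
        obtain ⟨a, ha, b, hb, rfl⟩ := Submodule.mem_sup.mp hxr
        obtain ⟨c, rfl⟩ := Submodule.mem_span_singleton.mp hb
        have ha2 : a ∈ s ⊔ K ∙ z := by
          have := Submodule.sub_mem (s ⊔ K ∙ z) (Submodule.mem_sup_left hxs)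
            (Submodule.mem_sup_right ((K ∙ z).smul_mem c (Submodule.mem_span_singleton_self z)))
          simpa using this
        have ha0 : a = 0 := Submodule.disjoint_def.mp hc.disjoint a ha2 ha
        subst ha0
        rw [zero_add] at hxs ⊢
        rcases eq_or_ne c 0 with rfl | hc0
        · simp
        · exact absurd (by simpa [smul_smul, inv_mul_cancel₀ hc0] using s.smul_mem c⁻¹ hxs) hzs
      · rw [codisjoint_iff]
        have : s ⊔ (r' ⊔ K ∙ z) = (s ⊔ K ∙ z) ⊔ r' := by
          rw [sup_comm r' (K ∙ z), ← sup_assoc]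
        rw [this]
        exact hc.codisjoint.eq_top
    exact ⟨r' ⊔ K ∙ z, key p hzp hr'p, key q hzq hr'q⟩

lemma exists_partial_compl {K V : Type*} [Field K] [AddCommGroup V] [Module K V]
    (p q : Submodule K V) :
    ∃ A ≤ p, A ⊔ q = p ⊔ q ∧ Disjoint A q := by
  obtain ⟨r, hr⟩ := (Submodule.comap p.subtype q).exists_isCompl
  refine ⟨Submodule.map p.subtype r, Submodule.map_subtype_le p r, ?_, ?_⟩
  · have h1 : Submodule.map p.subtype r ⊔ (p ⊓ q) = p := by
      rw [← Submodule.map_comap_subtype, ← Submodule.map_sup, sup_comm,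
        hr.codisjoint.eq_top, Submodule.map_top, Submodule.range_subtype]
    calc Submodule.map p.subtype r ⊔ q
        = Submodule.map p.subtype r ⊔ ((p ⊓ q) ⊔ q) := by rw [sup_eq_right.mpr (inf_le_right : p ⊓ q ≤ q)]
      _ = (Submodule.map p.subtype r ⊔ (p ⊓ q)) ⊔ q := by rw [sup_assoc]
      _ = p ⊔ q := by rw [h1]
  · rw [Submodule.disjoint_def]
    rintro x hx hxq
    obtain ⟨y, hy, rfl⟩ := Submodule.mem_map.mp hx
    have hy2 : y ∈ Submodule.comap p.subtype q := hxq
    have : y ∈ Submodule.comap p.subtype q ⊓ r := Submodule.mem_inf.mpr ⟨hy2, hy⟩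
    rw [hr.disjoint.eq_bot, Submodule.mem_bot] at this
    simp [this]

lemma task_aware_arith (n Z m d e fE3 fE4 fP3 fP4 fS fA fB fC : ℕ)
    (hZn : Z ≤ n) (hm : m = min (2 * Z) n)
    (hsupinf : fS + d = m + m) (hplus : fS ≤ 3 * Z) (hsupVle : fS ≤ n)
    (f3 : m + fE3 = fP3 + d) (f4 : m + fE4 = fP4 + d)
    (hminus13 : min Z (n - Z) ≤ fP3) (hminus24 : min Z (n - Z) ≤ fP4)
    (hdm : d ≤ m) (hE3d : fE3 ≤ d) (hE4d : fE4 ≤ d)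
    (he : e = min (min fE3 fE4) (d + Z - m))
    (hrrank : e + fC = d) (hArank : fA + fC = m) (hBrank : fB + fC = m) :
    fA ≤ Z ∧ fB ≤ Z ∧ fC ≤ Z := by omega

set_option linter.all false
set_option maxHeartbeats 400000
set_option synthInstance.maxHeartbeats 1000000

/-- Theorem 3, sufficient condition: if the necessary dimension
conditions hold and `V₃ = (W₁ ⊓ V₃) + (V₃ ⊓ V₄)`, `V₄ = (W₂ ⊓ V₄) + (V₃ ⊓ V₄)`,
then the lower bound is achievable: there are subspaces `A ⊆ W₁`, `B ⊆ W₂`,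
`C ⊆ ℝⁿ`, each of dimension at most `Z`, with `A ⊔ C = V₃`, `B ⊔ C = V₄`. -/
theorem task_aware_coding_sufficient_condition
    (n Z : ℕ) (hn : 0 < n) (hZ : 0 < Z) (hZn : Z ≤ n)
    (W₁ W₂ V₃ V₄ : Submodule ℝ (Fin n → ℝ))
    (hV₃ : Module.finrank ℝ ↥V₃ = min (2 * Z) n)
    (hV₄ : Module.finrank ℝ ↥V₄ = min (2 * Z) n)
    (hW : W₁ ⊔ W₂ = ⊤)
    (hplus : Module.finrank ℝ ↥(V₃ ⊔ V₄) ≤ 3 * Z)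
    (hminus13 : min Z (n - Z) ≤ Module.finrank ℝ ↥(W₁ ⊓ V₃))
    (hminus24 : min Z (n - Z) ≤ Module.finrank ℝ ↥(W₂ ⊓ V₄))
    (hspan3 : V₃ = (W₁ ⊓ V₃) ⊔ (V₃ ⊓ V₄))
    (hspan4 : V₄ = (W₂ ⊓ V₄) ⊔ (V₃ ⊓ V₄)) :
    ∃ A B C : Submodule ℝ (Fin n → ℝ),
      A ≤ W₁ ∧ B ≤ W₂ ∧
      Module.finrank ℝ ↥A ≤ Z ∧ Module.finrank ℝ ↥B ≤ Z ∧
      Module.finrank ℝ ↥C ≤ Z ∧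
      A ⊔ C = V₃ ∧ B ⊔ C = V₄ := by
  classical
  set m := min (2 * Z) n with hm
  set D := V₃ ⊓ V₄ with hD
  set d := Module.finrank ℝ D with hd
  set P₃ := W₁ ⊓ V₃ with hP₃
  set P₄ := W₂ ⊓ V₄ with hP₄
  set E₃ := P₃ ⊓ D with hE₃
  set E₄ := P₄ ⊓ D with hE₄
  have hamb : Module.finrank ℝ (Fin n → ℝ) = n := Module.finrank_fin_fun ℝ
  have hdm : d ≤ m := hV₃ ▸ Submodule.finrank_mono inf_le_left
  have hsupVle : Module.finrank ℝ ↥(V₃ ⊔ V₄) ≤ n := by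
    have := Submodule.finrank_le (V₃ ⊔ V₄); rwa [hamb] at this
  have hsupinf := Submodule.finrank_sup_add_finrank_inf_eq V₃ V₄
  rw [hV₃, hV₄, ← hD, ← hd] at hsupinf
  have f3 := Submodule.finrank_sup_add_finrank_inf_eq P₃ D
  rw [← hspan3, hV₃, ← hd, ← hE₃] at f3
  have f4 := Submodule.finrank_sup_add_finrank_inf_eq P₄ D
  rw [← hspan4, hV₄, ← hd, ← hE₄] at f4
  have hP₃le : Module.finrank ℝ ↥P₃ ≤ m := hV₃ ▸ Submodule.finrank_mono inf_le_right
  have hP₄le : Module.finrank ℝ ↥P₄ ≤ m := hV₄ ▸ Submodule.finrank_mono inf_le_right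
  have hE₃d : Module.finrank ℝ ↥E₃ ≤ d := Submodule.finrank_mono inf_le_right
  have hE₄d : Module.finrank ℝ ↥E₄ ≤ d := Submodule.finrank_mono inf_le_right
  have hP₃V : P₃ ≤ V₃ := inf_le_right
  have hP₄V : P₄ ≤ V₄ := inf_le_right
  have hDV₃ : D ≤ V₃ := inf_le_left
  have hDV₄ : D ≤ V₄ := inf_le_right
  have hP₃W : P₃ ≤ W₁ := inf_le_left
  have hP₄W : P₄ ≤ W₂ := inf_le_left
  have hE₃P : E₃ ≤ P₃ := inf_le_left
  have hE₄P : E₄ ≤ P₄ := inf_le_left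
  have hE₃D : E₃ ≤ D := inf_le_right
  have hE₄D : E₄ ≤ D := inf_le_right
  clear_value m D d P₃ P₄ E₃ E₄
  clear hE₃ hE₄ hP₃ hP₄ hD
  set e := min (min (Module.finrank ℝ ↥E₃) (Module.finrank ℝ ↥E₄)) (d + Z - m) with he
  have heE₃ : e ≤ Module.finrank ℝ ↥E₃ := le_trans (min_le_left _ _) (min_le_left _ _)
  have heE₄ : e ≤ Module.finrank ℝ ↥E₄ := le_trans (min_le_left _ _) (min_le_right _ _)
  clear_value e
  obtain ⟨E₃', hE₃'le, hE₃'rank⟩ := exists_le_finrank_eq e E₃ heE₃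
  obtain ⟨E₄', hE₄'le, hE₄'rank⟩ := exists_le_finrank_eq e E₄ heE₄
  have hE₃'D : E₃' ≤ D := le_trans hE₃'le hE₃D
  have hE₄'D : E₄' ≤ D := le_trans hE₄'le hE₄D
  have hc3 : Module.finrank ℝ (Submodule.comap D.subtype E₃') = e := by
    rw [← hE₃'rank]; exact (Submodule.comapSubtypeEquivOfLe hE₃'D).finrank_eq
  have hc4 : Module.finrank ℝ (Submodule.comap D.subtype E₄') = e := by
    rw [← hE₄'rank]; exact (Submodule.comapSubtypeEquivOfLe hE₄'D).finrank_eq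
  obtain ⟨r, hr3, hr4⟩ := exists_common_compl (Submodule.comap D.subtype E₃')
    (Submodule.comap D.subtype E₄') (by rw [hc3, hc4])
  obtain ⟨C, hC⟩ : ∃ C, C = Submodule.map D.subtype r := ⟨_, rfl⟩
  have hCD : C ≤ D := by rw [hC]; exact Submodule.map_subtype_le D r
  have hCrank : Module.finrank ℝ ↥C = Module.finrank ℝ r := by
    rw [hC]; exact Submodule.finrank_map_subtype_eq D r
  have hrrank : e + Module.finrank ℝ ↥C = d := by
    have h1 := Submodule.finrank_add_eq_of_isCompl hr3
    rw [hc3] at h1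
    rw [hCrank, h1]
    exact hd.symm
  have hsupD3 : E₃' ⊔ C = D := by
    have h1 : Submodule.map D.subtype (Submodule.comap D.subtype E₃' ⊔ r) = D := by
      rw [hr3.codisjoint.eq_top, Submodule.map_top, Submodule.range_subtype]
    rw [Submodule.map_sup, Submodule.map_comap_subtype, inf_of_le_right hE₃'D, ← hC] at h1
    exact h1
  have hsupD4 : E₄' ⊔ C = D := by
    have h1 : Submodule.map D.subtype (Submodule.comap D.subtype E₄' ⊔ r) = D := by
      rw [hr4.codisjoint.eq_top, Submodule.map_top, Submodule.range_subtype]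
    rw [Submodule.map_sup, Submodule.map_comap_subtype, inf_of_le_right hE₄'D, ← hC] at h1
    exact h1
  clear hC hr3 hr4 hc3 hc4
  have hPC3 : P₃ ⊔ C = V₃ := by
    apply le_antisymm
    · exact sup_le hP₃V (le_trans hCD hDV₃)
    · rw [hspan3, ← hsupD3]
      exact sup_le le_sup_left
        (sup_le (le_trans (le_trans hE₃'le hE₃P) le_sup_left) le_sup_right)
  have hPC4 : P₄ ⊔ C = V₄ := by
    apply le_antisymm
    · exact sup_le hP₄V (le_trans hCD hDV₄)
    · rw [hspan4, ← hsupD4]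
      exact sup_le le_sup_left
        (sup_le (le_trans (le_trans hE₄'le hE₄P) le_sup_left) le_sup_right)
  obtain ⟨A, hAP, hAsup, hAdisj⟩ := exists_partial_compl P₃ C
  obtain ⟨B, hBP, hBsup, hBdisj⟩ := exists_partial_compl P₄ C
  have hAC : A ⊔ C = V₃ := hAsup.trans hPC3
  have hBC : B ⊔ C = V₄ := hBsup.trans hPC4
  have hArank : Module.finrank ℝ ↥A + Module.finrank ℝ ↥C = m := by
    have h1 := Submodule.finrank_sup_add_finrank_inf_eq A C
    rw [hAC, hV₃, hAdisj.eq_bot, finrank_bot, add_zero] at h1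
    exact h1.symm
  have hBrank : Module.finrank ℝ ↥B + Module.finrank ℝ ↥C = m := by
    have h1 := Submodule.finrank_sup_add_finrank_inf_eq B C
    rw [hBC, hV₄, hBdisj.eq_bot, finrank_bot, add_zero] at h1
    exact h1.symm
  obtain ⟨hAZ, hBZ, hCZ⟩ := task_aware_arith n Z m d e _ _ _ _ _ _ _ _
    hZn hm hsupinf hplus hsupVle f3 f4 hminus13 hminus24 hdm hE₃d hE₄d he hrrank hArank hBrank
  exact ⟨A, B, C, le_trans hAP hP₃W, le_trans hBP hP₄W, hAZ, hBZ, hCZ, hAC, hBC⟩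
end

section
/- There exist subspaces A ⊆ W₁, B ⊆ W₂, and C ⊆ ℝⁿ, each of dimension at most Z, such that A + C = ℝⁿ and B + C = ℝⁿ. -/
/-!
Take `A` spanned by the first `n - Z` columns of `L` and `B` by the last `n - Z`; both have
dimension `n - Z ≤ Z`, and `A ≤ W₁`, `B ≤ W₂` because `a, b ≥ n - Z`. Over an infinite field two
subspaces of equal dimension have a common complement `C` (adjoin, one at a time, vectors lying
outside both, which exist since a vector space is not the union of two proper subspaces), and
`dim C = n - (n - Z) ≤ Z`.
-/

open Matrix
open Module Submodule

theorem Subspace.exists_notMem_notMem {K V : Type*} [DivisionRing K] [Infinite K]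
    [AddCommGroup V] [Module K V] {p q : Submodule K V} (hp : p ≠ ⊤) (hq : q ≠ ⊤) :
    ∃ v, v ∉ p ∧ v ∉ q := by
  by_contra! h
  obtain ⟨i, hi⟩ := Subspace.exists_eq_top_of_iUnion_eq_univ (p := ![p, q])
    (Set.eq_univ_of_forall fun v ↦ by by_cases hv : v ∈ p <;> simp [Fin.exists_fin_two, *])
  fin_cases i <;> simp_all

theorem Submodule.exists_isCompl_isCompl_of_finrank_eq {K V : Type*} [DivisionRing K]
    [Infinite K] [AddCommGroup V] [Module K V] [FiniteDimensional K V] {p q : Submodule K V}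
    (hpq : finrank K p = finrank K q) : ∃ C : Submodule K V, IsCompl p C ∧ IsCompl q C := by
  induction hd : finrank K V - finrank K p generalizing p q with
  | zero =>
    have hp : p = ⊤ := eq_top_of_finrank_eq (by have := p.finrank_le; omega)
    have hq : q = ⊤ := eq_top_of_finrank_eq (by have := q.finrank_le; omega)
    exact ⟨⊥, hp ▸ isCompl_top_bot, hq ▸ isCompl_top_bot⟩
  | succ d ih =>
    have hp : p ≠ ⊤ := by rintro rfl; simp at hd
    have hq : q ≠ ⊤ := by rintro rfl; rw [finrank_top] at hpq; omega
    obtain ⟨v, hvp, hvq⟩ := Subspace.exists_notMem_notMem hp hq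
    obtain ⟨C, hpC, hqC⟩ := ih (p := p ⊔ K ∙ v) (q := q ⊔ K ∙ v)
      (by rw [finrank_sup_span_singleton hvp, finrank_sup_span_singleton hvq, hpq])
      (by rw [finrank_sup_span_singleton hvp]; omega)
    exact ⟨K ∙ v ⊔ C,
      (disjoint_span_singleton_of_notMem hvp).isCompl_sup_right_of_isCompl_sup_left hpC,
      (disjoint_span_singleton_of_notMem hvq).isCompl_sup_right_of_isCompl_sup_left hqC⟩

theorem LinearIndependent.finrank_span_image {R M ι : Type*} [Ring R] [StrongRankCondition R]
    [AddCommGroup M] [Module R M] {v : ι → M} (hv : LinearIndependent R v) {s : Set ι}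
    (hs : s.Finite) : finrank R (span R (v '' s)) = s.ncard := by
  have := hs.fintype
  have := nontrivial_of_invariantBasisNumber R
  rw [Set.image_eq_range, Set.ncard_eq_toFinset_card', Set.toFinset_card]
  exact finrank_span_eq_card (hv.comp _ Subtype.val_injective)

theorem Fin.ncard_setOf_val_lt (n m : ℕ) : {j : Fin n | (j : ℕ) < m}.ncard = min n m := by
  rw [Set.ncard_eq_toFinset_card']
  simp [Fin.card_filter_val_lt]

theorem Fin.ncard_setOf_le_val (n m : ℕ) : {j : Fin n | m ≤ (j : ℕ)}.ncard = n - m := by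
  have h := Set.ncard_add_ncard_compl {j : Fin n | (j : ℕ) < m}
  simp only [Set.compl_ofPred, not_lt, Nat.card_eq_fintype_card, Fintype.card_fin,
    Fin.ncard_setOf_val_lt] at h
  omega

theorem task_aware_coding_sufficient_condition_large_Z_general
    (n Z a b : ℕ)
    (hn2Z : n < 2 * Z)
    (haZ : n - Z ≤ a) (hbZ : n - Z ≤ b)
    (L : Matrix (Fin n) (Fin n) ℝ) (hL : IsUnit L.det)
    (W₁ W₂ : Submodule ℝ (Fin n → ℝ))
    (hW₁ : W₁ = Submodule.span ℝ ((fun j : Fin n => Lᵀ j) '' {j : Fin n | (j : ℕ) < a}))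
    (hW₂ : W₂ = Submodule.span ℝ ((fun j : Fin n => Lᵀ j) '' {j : Fin n | n - b ≤ (j : ℕ)})) :
    ∃ A B C : Submodule ℝ (Fin n → ℝ),
      A ≤ W₁ ∧ B ≤ W₂ ∧
      Module.finrank ℝ ↥A ≤ Z ∧ Module.finrank ℝ ↥B ≤ Z ∧
      Module.finrank ℝ ↥C ≤ Z ∧
      A ⊔ C = ⊤ ∧ B ⊔ C = ⊤ := by
  have hcols : LinearIndependent ℝ (fun j : Fin n => Lᵀ j) :=
    linearIndependent_cols_iff_isUnit.mpr ((isUnit_iff_isUnit_det L).mpr hL)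
  set A := span ℝ ((fun j : Fin n => Lᵀ j) '' {j : Fin n | (j : ℕ) < n - Z})
  set B := span ℝ ((fun j : Fin n => Lᵀ j) '' {j : Fin n | Z ≤ (j : ℕ)})
  have hA : finrank ℝ A = n - Z := by
    rw [hcols.finrank_span_image (Set.toFinite _), Fin.ncard_setOf_val_lt]; omega
  have hB : finrank ℝ B = n - Z := by
    rw [hcols.finrank_span_image (Set.toFinite _), Fin.ncard_setOf_le_val]
  obtain ⟨C, hAC, hBC⟩ := exists_isCompl_isCompl_of_finrank_eq (hA.trans hB.symm)
  have hC : finrank ℝ A + finrank ℝ C = n := by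
    rw [finrank_add_eq_of_isCompl hAC, finrank_fin_fun]
  refine ⟨A, B, C, ?_, ?_, by omega, by omega, by omega,
    hAC.codisjoint.eq_top, hBC.codisjoint.eq_top⟩
  · exact hW₁ ▸ span_mono (Set.image_mono fun j (hj : (j : ℕ) < n - Z) ↦
      (by omega : (j : ℕ) < a))
  · exact hW₂ ▸ span_mono (Set.image_mono fun j (hj : Z ≤ (j : ℕ)) ↦
      (by omega : n - b ≤ (j : ℕ)))

/-- Theorem 3, case `2Z > n`: with `W₁` the span of the first `a`
columns of an invertible `L` and `W₂` the span of the last `b` columns, and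
`a, b ≥ n - Z`, `Z ≤ n < 2Z`, there exist subspaces `A ⊆ W₁`, `B ⊆ W₂`,
`C ⊆ ℝⁿ`, each of dimension at most `Z`, with `A + C = ℝⁿ` and `B + C = ℝⁿ`. -/
theorem task_aware_coding_sufficient_condition_large_Z
    (n Z a b : ℕ) (hn : 0 < n) (hZ : 0 < Z) (ha : 0 < a) (hb : 0 < b)
    (hZn : Z ≤ n) (hn2Z : n < 2 * Z)
    (han : a ≤ n) (hbn : b ≤ n) (hnab : n ≤ a + b)
    (haZ : n - Z ≤ a) (hbZ : n - Z ≤ b)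
    (L : Matrix (Fin n) (Fin n) ℝ) (hL : IsUnit L.det)
    (W₁ W₂ : Submodule ℝ (Fin n → ℝ))
    (hW₁ : W₁ = Submodule.span ℝ ((fun j : Fin n => Lᵀ j) '' {j : Fin n | (j : ℕ) < a}))
    (hW₂ : W₂ = Submodule.span ℝ ((fun j : Fin n => Lᵀ j) '' {j : Fin n | n - b ≤ (j : ℕ)})) :
    ∃ A B C : Submodule ℝ (Fin n → ℝ),
      A ≤ W₁ ∧ B ≤ W₂ ∧
      Module.finrank ℝ ↥A ≤ Z ∧ Module.finrank ℝ ↥B ≤ Z ∧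
      Module.finrank ℝ ↥C ≤ Z ∧
      A ⊔ C = ⊤ ∧ B ⊔ C = ⊤ :=
  task_aware_coding_sufficient_condition_large_Z_general n Z a b hn2Z haZ hbZ L hL W₁ W₂ hW₁ hW₂
end

section
/- Suppose dim(V₃ + V₄) ≤ 3Z, V₃ = (W₁ ∩ V₃) + (V₃ ∩ V₄), V₄ = (W₂ ∩ V₄) + (V₃ ∩ V₄), and V₃ ∩ V₄ ⊆ W₁ ∩ W₂, and suppose W₁ + W₂ = ℝⁿ. Then V₃ ⊆ W₁ and V₄ ⊆ W₂, and there exist subspaces A ⊆ W₁, B ⊆ W₂, and C ⊆ ℝⁿ, each of dimension at most Z, such that A + C = V₃ and B + C = V₄. -/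
open Module Submodule

/-- Inside a finite-dimensional subspace one can find a subspace of any smaller dimension. -/
lemma exists_sub_of_le_finrank (n : ℕ) (D : Submodule ℝ (Fin n → ℝ)) (k : ℕ)
    (hk : k ≤ Module.finrank ℝ ↥D) :
    ∃ C : Submodule ℝ (Fin n → ℝ), C ≤ D ∧ Module.finrank ℝ ↥C = k := by
  obtain ⟨f, hf⟩ := exists_linearIndependent_of_le_finrank (R := ℝ) (M := ↥D) hk
  have hf' : LinearIndependent ℝ (D.subtype ∘ f) :=
    hf.map' D.subtype (Submodule.ker_subtype D)
  refine ⟨Submodule.span ℝ (Set.range (D.subtype ∘ f)), ?_, ?_⟩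
  · rw [Submodule.span_le]
    rintro x ⟨i, rfl⟩
    exact (f i).2
  · rw [finrank_span_eq_card hf']
    simp
  
/-- Given `C ≤ V` in a finite-dimensional space, there is `A ≤ V` with
`A ⊔ C = V` and complementary dimension. -/
lemma exists_compl_in (n : ℕ) (V C : Submodule ℝ (Fin n → ℝ)) (h : C ≤ V) :
    ∃ A : Submodule ℝ (Fin n → ℝ), A ≤ V ∧ A ⊔ C = V ∧
      Module.finrank ℝ ↥A + Module.finrank ℝ ↥C = Module.finrank ℝ ↥V := by
  obtain ⟨A', hA'⟩ := Submodule.exists_isCompl (Submodule.comap V.subtype C)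
  refine ⟨A'.map V.subtype, Submodule.map_subtype_le V A', ?_, ?_⟩
  · have : A'.map V.subtype ⊔ (Submodule.comap V.subtype C).map V.subtype = V := by
      rw [← Submodule.map_sup, hA'.symm.sup_eq_top, Submodule.map_top, Submodule.range_subtype]
    rwa [Submodule.map_comap_subtype, inf_eq_right.mpr h] at this
  · have hsup : A'.map V.subtype ⊔ C = V := by
      have : A'.map V.subtype ⊔ (Submodule.comap V.subtype C).map V.subtype = V := by
        rw [← Submodule.map_sup, hA'.symm.sup_eq_top, Submodule.map_top, Submodule.range_subtype]
      rwa [Submodule.map_comap_subtype, inf_eq_right.mpr h] at this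
    have hinf : A'.map V.subtype ⊓ C = ⊥ := by
      have : A'.map V.subtype ⊓ (Submodule.comap V.subtype C).map V.subtype = ⊥ := by
        rw [← Submodule.map_inf _ (Submodule.injective_subtype V), hA'.symm.inf_eq_bot,
          Submodule.map_bot]
      rwa [Submodule.map_comap_subtype, inf_eq_right.mpr h] at this
    have := Submodule.finrank_sup_add_finrank_inf_eq (A'.map V.subtype) C
    rw [hsup, hinf, finrank_bot, add_zero] at this
    omega

/-- Corollary 4: if additionally `V₃ ⊓ V₄ ⊆ W₁ ⊓ W₂`, then
`V₃ ⊆ W₁`, `V₄ ⊆ W₂`, and the lower bound is achievable. -/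
theorem task_aware_coding_sufficient_condition_intersection
    (n Z : ℕ) (hn : 0 < n) (hZ : 0 < Z) (hZn : Z ≤ n)
    (W₁ W₂ V₃ V₄ : Submodule ℝ (Fin n → ℝ))
    (hV₃ : Module.finrank ℝ ↥V₃ = min (2 * Z) n)
    (hV₄ : Module.finrank ℝ ↥V₄ = min (2 * Z) n)
    (hW : W₁ ⊔ W₂ = ⊤)
    (hplus : Module.finrank ℝ ↥(V₃ ⊔ V₄) ≤ 3 * Z)
    (hspan3 : V₃ = (W₁ ⊓ V₃) ⊔ (V₃ ⊓ V₄))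
    (hspan4 : V₄ = (W₂ ⊓ V₄) ⊔ (V₃ ⊓ V₄))
    (hsub : V₃ ⊓ V₄ ≤ W₁ ⊓ W₂) :
    V₃ ≤ W₁ ∧ V₄ ≤ W₂ ∧
    ∃ A B C : Submodule ℝ (Fin n → ℝ),
      A ≤ W₁ ∧ B ≤ W₂ ∧
      Module.finrank ℝ ↥A ≤ Z ∧ Module.finrank ℝ ↥B ≤ Z ∧
      Module.finrank ℝ ↥C ≤ Z ∧
      A ⊔ C = V₃ ∧ B ⊔ C = V₄ := by
  have hV3W1 : V₃ ≤ W₁ := by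
    conv_lhs => rw [hspan3]
    exact sup_le inf_le_left (hsub.trans inf_le_left)
  have hV4W2 : V₄ ≤ W₂ := by
    conv_lhs => rw [hspan4]
    exact sup_le inf_le_left (hsub.trans inf_le_right)
  refine ⟨hV3W1, hV4W2, ?_⟩
  set D := V₃ ⊓ V₄ with hD
  set d := Module.finrank ℝ ↥D with hd
  set m := min (2 * Z) n with hm
  have hsum : Module.finrank ℝ ↥(V₃ ⊔ V₄) + d = m + m := by
    have h0 := Submodule.finrank_sup_add_finrank_inf_eq V₃ V₄
    rw [hV₃, hV₄] at h0
    rw [hd, hD]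
    exact h0
  have hsupn : Module.finrank ℝ ↥(V₃ ⊔ V₄) ≤ n := by
    have := Submodule.finrank_le (V₃ ⊔ V₄)
    rwa [Module.finrank_fin_fun ℝ] at this
  -- key inequalities
  have hdge : m - Z ≤ min Z d := by omega
  obtain ⟨C, hCD, hCk⟩ := exists_sub_of_le_finrank n D (min Z d) (by omega)
  have hCV3 : C ≤ V₃ := hCD.trans inf_le_left
  have hCV4 : C ≤ V₄ := hCD.trans inf_le_right
  obtain ⟨A, hAV3, hAC, hAdim⟩ := exists_compl_in n V₃ C hCV3
  obtain ⟨B, hBV4, hBC, hBdim⟩ := exists_compl_in n V₄ C hCV4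
  refine ⟨A, B, C, hAV3.trans hV3W1, hBV4.trans hV4W2, ?_, ?_, ?_, hAC, hBC⟩
  · rw [hV₃] at hAdim; omega
  · rw [hV₄] at hBdim; omega
  · omega
end

section
/- Suppose dim(V₃ + V₄) ≤ 3Z, V₃ = (W₁ ∩ V₃) + (V₃ ∩ V₄), V₄ = (W₂ ∩ V₄) + (V₃ ∩ V₄), and V₃ ∩ V₄ ⊆ W₁ ∩ W₂, and suppose W₁ + W₂ = ℝⁿ. Then the lower bound can be achieved without network coding: there exist subspaces A ⊆ W₁, B ⊆ W₂, C₁ ⊆ W₁, and C₂ ⊆ W₂ with dim A ≤ Z, dim B ≤ Z, and dim C₁ + dim C₂ ≤ Z, such that A + C₁ + C₂ = V₃ and B + C₁ + C₂ = V₄. -/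
open Module Submodule

/-- A finite-dimensional space has a subspace of every dimension up to its own. -/
lemma aux_exists_finrank {K V : Type*} [Field K] [AddCommGroup V] [Module K V]
    [FiniteDimensional K V] {k : ℕ} (h : k ≤ finrank K V) :
    ∃ p : Submodule K V, finrank K ↥p = k := by
  obtain ⟨v, hv⟩ := exists_linearIndependent_of_le_finrank h
  exact ⟨Submodule.span K (Set.range v), by
    rw [finrank_span_eq_card hv, Fintype.card_fin]⟩

/-- Relative complement with dimensions. -/
lemma aux_compl {K V : Type*} [Field K] [AddCommGroup V] [Module K V]
    [FiniteDimensional K V] (p V' : Submodule K V) (h : p ≤ V') :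
    ∃ q : Submodule K V, q ≤ V' ∧ p ⊔ q = V' ∧
      finrank K ↥q + finrank K ↥p = finrank K ↥V' := by
  obtain ⟨q', hq'⟩ := (p.comap V'.subtype).exists_isCompl
  refine ⟨q'.map V'.subtype, map_subtype_le _ _, ?_, ?_⟩
  · have : p ⊔ q'.map V'.subtype
        = (p.comap V'.subtype ⊔ q').map V'.subtype := by
      rw [Submodule.map_sup, Submodule.map_comap_subtype, inf_eq_right.mpr h]
    rw [this, hq'.sup_eq_top, Submodule.map_subtype_top]
  · have h1 := Submodule.finrank_add_eq_of_isCompl hq'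
    have h2 : finrank K ↥(q'.map V'.subtype) = finrank K ↥q' :=
      Submodule.finrank_map_subtype_eq V' q'
    have h3 : finrank K ↥((p.comap V'.subtype).map V'.subtype) =
        finrank K ↥(p.comap V'.subtype) := Submodule.finrank_map_subtype_eq V' _
    rw [Submodule.map_comap_subtype, inf_eq_right.mpr h] at h3
    omega

/-- Corollary 4, no-coding version: under the hypotheses of
Corollary 4, the lower bound can be achieved without network coding:
the middle code `C` decomposes as `C₁ + C₂` with `C₁ ⊆ W₁`, `C₂ ⊆ W₂` and
`dim C₁ + dim C₂ ≤ Z`. -/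
theorem task_aware_coding_no_coding_needed
    (n Z : ℕ) (hn : 0 < n) (hZ : 0 < Z) (hZn : Z ≤ n)
    (W₁ W₂ V₃ V₄ : Submodule ℝ (Fin n → ℝ))
    (hV₃ : Module.finrank ℝ ↥V₃ = min (2 * Z) n)
    (hV₄ : Module.finrank ℝ ↥V₄ = min (2 * Z) n)
    (hW : W₁ ⊔ W₂ = ⊤)
    (hplus : Module.finrank ℝ ↥(V₃ ⊔ V₄) ≤ 3 * Z)
    (hspan3 : V₃ = (W₁ ⊓ V₃) ⊔ (V₃ ⊓ V₄))
    (hspan4 : V₄ = (W₂ ⊓ V₄) ⊔ (V₃ ⊓ V₄))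
    (hsub : V₃ ⊓ V₄ ≤ W₁ ⊓ W₂) :
    ∃ A B C₁ C₂ : Submodule ℝ (Fin n → ℝ),
      A ≤ W₁ ∧ B ≤ W₂ ∧ C₁ ≤ W₁ ∧ C₂ ≤ W₂ ∧
      Module.finrank ℝ ↥A ≤ Z ∧ Module.finrank ℝ ↥B ≤ Z ∧
      Module.finrank ℝ ↥C₁ + Module.finrank ℝ ↥C₂ ≤ Z ∧
      A ⊔ (C₁ ⊔ C₂) = V₃ ∧ B ⊔ (C₁ ⊔ C₂) = V₄ := by
  set m := min (2 * Z) n with hm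
  set D := V₃ ⊓ V₄ with hD
  -- V₃ ≤ W₁, V₄ ≤ W₂
  have hV₃W : V₃ ≤ W₁ := by
    rw [hspan3]; exact sup_le inf_le_left (hsub.trans inf_le_left)
  have hV₄W : V₄ ≤ W₂ := by
    rw [hspan4]; exact sup_le inf_le_left (hsub.trans inf_le_right)
  -- dimension count for D
  have hsum := Submodule.finrank_sup_add_finrank_inf_eq V₃ V₄
  rw [hV₃, hV₄, ← hD] at hsum
  have hsn : finrank ℝ ↥(V₃ ⊔ V₄) ≤ n := by
    simpa [Module.finrank_fintype_fun_eq_card] using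
      Submodule.finrank_le (V₃ ⊔ V₄)
  have hDc : m - Z ≤ finrank ℝ ↥D := by omega
  -- choose C₁ ⊆ D of dimension m - Z
  obtain ⟨C₁', hC₁'⟩ := aux_exists_finrank (K := ℝ) (V := ↥D) hDc
  set C₁ := C₁'.map D.subtype with hC₁def
  have hC₁D : C₁ ≤ D := map_subtype_le _ _
  have hC₁rank : finrank ℝ ↥C₁ = m - Z := by
    rw [hC₁def, Submodule.finrank_map_subtype_eq, hC₁']
  have hC₁V₃ : C₁ ≤ V₃ := hC₁D.trans inf_le_left
  have hC₁V₄ : C₁ ≤ V₄ := hC₁D.trans inf_le_right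
  -- complements in V₃ and V₄
  obtain ⟨A, hAV₃, hAsup, hArank⟩ := aux_compl C₁ V₃ hC₁V₃
  obtain ⟨B, hBV₄, hBsup, hBrank⟩ := aux_compl C₁ V₄ hC₁V₄
  rw [hV₃] at hArank
  rw [hV₄] at hBrank
  refine ⟨A, B, C₁, ⊥, hAV₃.trans hV₃W, hBV₄.trans hV₄W,
    hC₁D.trans (hsub.trans inf_le_left), bot_le, by omega, by omega, ?_, ?_, ?_⟩
  · simp only [finrank_bot]; omega
  · rw [sup_bot_eq, sup_comm, hAsup]
  · rw [sup_bot_eq, sup_comm, hBsup]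
end

section
/- Suppose W₁ + W₂ = ℝⁿ, dim W₁ ≥ n − Z, dim W₂ ≥ n − Z, dim(V₃ + V₄) ≤ 3Z, V₃ = (W₁ ∩ V₃) + (V₃ ∩ V₄), and V₄ = (W₂ ∩ V₄) + (V₃ ∩ V₄). Then there exist subspaces A ⊆ W₁, B ⊆ W₂, and C ⊆ ℝⁿ, each of dimension at most Z, such that A + C = V₃ and B + C = V₄. -/
open Module Submodule

variable {K : Type*} {V : Type*} [Field K] [AddCommGroup V] [Module K V]

/-- A submodule is not the union of two proper submodules. -/
lemma aux_avoid_two (E₁ E₂ D : Submodule K V) (h₁ : E₁ ≤ D) (h₂ : E₂ ≤ D)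
    (hne₁ : E₁ ≠ D) (hne₂ : E₂ ≠ D) : ∃ v ∈ D, v ∉ E₁ ∧ v ∉ E₂ := by
  obtain ⟨x, hxD, hxE₁⟩ := SetLike.exists_of_lt (lt_of_le_of_ne h₁ hne₁)
  obtain ⟨y, hyD, hyE₂⟩ := SetLike.exists_of_lt (lt_of_le_of_ne h₂ hne₂)
  by_cases hx2 : x ∈ E₂
  · by_cases hy1 : y ∈ E₁
    · refine ⟨x + y, D.add_mem hxD hyD, ?_, ?_⟩
      · intro h
        exact hxE₁ (by simpa using E₁.sub_mem h hy1)
      · intro h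
        exact hyE₂ (by simpa using E₂.sub_mem h hx2)
    · exact ⟨y, hyD, hy1, hyE₂⟩
  · exact ⟨x, hxD, hxE₁, hx2⟩

/-- Simultaneous relative "cospanning" subspace for two subspaces of `D`,
with dimension bounded by the max of the codimensions. -/
lemma aux_common_cospan [FiniteDimensional K V] :
    ∀ k : ℕ, ∀ E₁ E₂ D : Submodule K V, E₁ ≤ D → E₂ ≤ D →
    finrank K ↥D - finrank K ↥E₁ ≤ k → finrank K ↥D - finrank K ↥E₂ ≤ k →
    ∃ C : Submodule K V, C ≤ D ∧ E₁ ⊔ C = D ∧ E₂ ⊔ C = D ∧ finrank K ↥C ≤ k := by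
  intro k
  induction k with
  | zero =>
    intro E₁ E₂ D h₁ h₂ hk₁ hk₂
    have hm₁ : finrank K ↥E₁ ≤ finrank K ↥D := Submodule.finrank_mono h₁
    have hm₂ : finrank K ↥E₂ ≤ finrank K ↥D := Submodule.finrank_mono h₂
    have e₁ : E₁ = D := Submodule.eq_of_le_of_finrank_le h₁ (by omega)
    have e₂ : E₂ = D := Submodule.eq_of_le_of_finrank_le h₂ (by omega)
    exact ⟨⊥, bot_le, by simp [e₁], by simp [e₂], by simp⟩
  | succ k ih =>
    intro E₁ E₂ D h₁ h₂ hk₁ hk₂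
    -- choose v ∈ D avoiding each Eᵢ that is proper
    have hv : ∃ v ∈ D, (E₁ ≠ D → v ∉ E₁) ∧ (E₂ ≠ D → v ∉ E₂) := by
      by_cases hne₁ : E₁ = D
      · by_cases hne₂ : E₂ = D
        · exact ⟨0, D.zero_mem, fun h => absurd hne₁ h, fun h => absurd hne₂ h⟩
        · obtain ⟨y, hyD, hy⟩ := SetLike.exists_of_lt (lt_of_le_of_ne h₂ hne₂)
          exact ⟨y, hyD, fun h => absurd hne₁ h, fun _ => hy⟩
      · by_cases hne₂ : E₂ = D
        · obtain ⟨x, hxD, hx⟩ := SetLike.exists_of_lt (lt_of_le_of_ne h₁ hne₁)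
          exact ⟨x, hxD, fun _ => hx, fun h => absurd hne₂ h⟩
        · obtain ⟨v, hvD, hv₁, hv₂⟩ := aux_avoid_two E₁ E₂ D h₁ h₂ hne₁ hne₂
          exact ⟨v, hvD, fun _ => hv₁, fun _ => hv₂⟩
    obtain ⟨v, hvD, hv₁, hv₂⟩ := hv
    have hsv : (K ∙ v) ≤ D := by
      rwa [Submodule.span_singleton_le_iff_mem]
    have key : ∀ (E : Submodule K V), E ≤ D → (E ≠ D → v ∉ E) →
        finrank K ↥D - finrank K ↥E ≤ k + 1 →
        finrank K ↥D - finrank K ↥(E ⊔ (K ∙ v)) ≤ k := by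
      intro E hE hvE hEk
      by_cases hED : E = D
      · have hle : D ≤ E ⊔ (K ∙ v) := hED ▸ le_sup_left
        have : finrank K ↥D ≤ finrank K ↥(E ⊔ (K ∙ v)) :=
          Submodule.finrank_mono hle
        omega
      · have hvE' : v ∉ E := hvE hED
        have hlt : E < E ⊔ (K ∙ v) := by
          refine lt_of_le_of_ne le_sup_left ?_
          intro h
          exact hvE' (h ▸ (le_sup_right : (K ∙ v) ≤ E ⊔ (K ∙ v))
            (Submodule.mem_span_singleton_self v))
        have := Submodule.finrank_lt_finrank_of_lt hlt
        omega
    obtain ⟨C', hC'D, hC'₁, hC'₂, hC'rank⟩ :=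
      ih (E₁ ⊔ (K ∙ v)) (E₂ ⊔ (K ∙ v)) D (sup_le h₁ hsv) (sup_le h₂ hsv)
        (key E₁ h₁ hv₁ hk₁) (key E₂ h₂ hv₂ hk₂)
    refine ⟨(K ∙ v) ⊔ C', sup_le hsv hC'D, ?_, ?_, ?_⟩
    · rw [← sup_assoc]; exact hC'₁
    · rw [← sup_assoc]; exact hC'₂
    · have h1 : finrank K ↥((K ∙ v) ⊔ C') + finrank K ↥((K ∙ v) ⊓ C') =
          finrank K ↥(K ∙ v) + finrank K ↥C' :=
        Submodule.finrank_sup_add_finrank_inf_eq _ _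
      have h2 : finrank K ↥(K ∙ v) ≤ 1 := by
        by_cases hv0 : v = 0
        · subst hv0
          rw [Submodule.span_zero_singleton, finrank_bot]
          omega
        · rw [finrank_span_singleton hv0]
      omega

/-- Enlarge a subspace within `D` to any intermediate dimension. -/
lemma aux_grow [FiniteDimensional K V] :
    ∀ s : ℕ, ∀ C₀ D : Submodule K V, C₀ ≤ D → finrank K ↥C₀ + s ≤ finrank K ↥D →
    ∃ C : Submodule K V, C₀ ≤ C ∧ C ≤ D ∧ finrank K ↥C = finrank K ↥C₀ + s := by
  intro s
  induction s with
  | zero => intro C₀ D h _; exact ⟨C₀, le_rfl, h, by simp⟩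
  | succ s ih =>
    intro C₀ D hC₀ hs
    have hne : C₀ ≠ D := by
      intro h; subst h; omega
    obtain ⟨v, hvD, hvC₀⟩ := SetLike.exists_of_lt (lt_of_le_of_ne hC₀ hne)
    have hv0 : v ≠ 0 := fun h => hvC₀ (h ▸ C₀.zero_mem)
    have hdisj : Disjoint C₀ (K ∙ v) :=
      (Submodule.disjoint_span_singleton' hv0).mpr hvC₀
    have hrank : finrank K ↥(C₀ ⊔ (K ∙ v)) = finrank K ↥C₀ + 1 := by
      have h1 : finrank K ↥(C₀ ⊔ (K ∙ v)) + finrank K ↥(C₀ ⊓ (K ∙ v)) =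
          finrank K ↥C₀ + finrank K ↥(K ∙ v) :=
        Submodule.finrank_sup_add_finrank_inf_eq _ _
      rw [hdisj.eq_bot, finrank_span_singleton hv0] at h1
      simpa using h1
    have hle : C₀ ⊔ (K ∙ v) ≤ D :=
      sup_le hC₀ (by rwa [Submodule.span_singleton_le_iff_mem])
    obtain ⟨C, hC1, hC2, hC3⟩ := ih (C₀ ⊔ (K ∙ v)) D hle (by omega)
    exact ⟨C, le_trans le_sup_left hC1, hC2, by omega⟩

/-- Given `P ⊔ C = U`, there is `A ≤ P` with `A ⊔ C = U` and
`finrank A + finrank C = finrank U`. -/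
lemma aux_min_complement [FiniteDimensional K V] (P C U : Submodule K V)
    (h : P ⊔ C = U) :
    ∃ A : Submodule K V, A ≤ P ∧ A ⊔ C = U ∧
      finrank K ↥A + finrank K ↥C = finrank K ↥U := by
  obtain ⟨Q', hQ'⟩ := Submodule.exists_isCompl ((P ⊓ C).comap P.subtype)
  have hmap : Submodule.map P.subtype ((P ⊓ C).comap P.subtype) = P ⊓ C := by
    rw [Submodule.map_comap_subtype, ← inf_assoc, inf_idem]
  have hsup : Q'.map P.subtype ⊔ (P ⊓ C) = P := by
    rw [← hmap, ← Submodule.map_sup, hQ'.symm.sup_eq_top, Submodule.map_subtype_top]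
  have hinf : Q'.map P.subtype ⊓ (P ⊓ C) = ⊥ := by
    rw [← hmap, ← Submodule.map_inf _ (Submodule.injective_subtype P),
      hQ'.symm.inf_eq_bot, Submodule.map_bot]
  refine ⟨Q'.map P.subtype, Submodule.map_subtype_le _ _, ?_, ?_⟩
  · apply le_antisymm
    · exact sup_le ((Submodule.map_subtype_le _ _).trans (h ▸ le_sup_left))
        (h ▸ le_sup_right)
    · rw [← h]
      exact sup_le (le_trans (le_of_eq hsup.symm)
        (sup_le le_sup_left (inf_le_right.trans le_sup_right))) le_sup_right
  · have h1 : finrank K ↥(Q'.map P.subtype ⊔ (P ⊓ C)) +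
        finrank K ↥(Q'.map P.subtype ⊓ (P ⊓ C)) =
        finrank K ↥(Q'.map P.subtype) + finrank K ↥(P ⊓ C) :=
      Submodule.finrank_sup_add_finrank_inf_eq _ _
    rw [hsup, hinf] at h1
    have h2 : finrank K ↥(P ⊔ C) + finrank K ↥(P ⊓ C) =
        finrank K ↥P + finrank K ↥C :=
      Submodule.finrank_sup_add_finrank_inf_eq _ _
    rw [h] at h2
    simp only [finrank_bot] at h1
    omega

/-- Corollary 5: if `dim W₁ ≥ n - Z`, `dim W₂ ≥ n - Z`,
`dim (V₃ + V₄) ≤ 3Z` and the span conditions hold, then the lower bound is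
achievable. -/
theorem task_aware_coding_sufficient_condition_large_observations
    (n Z : ℕ) (hn : 0 < n) (hZ : 0 < Z) (hZn : Z ≤ n)
    (W₁ W₂ V₃ V₄ : Submodule ℝ (Fin n → ℝ))
    (hV₃ : Module.finrank ℝ ↥V₃ = min (2 * Z) n)
    (hV₄ : Module.finrank ℝ ↥V₄ = min (2 * Z) n)
    (hW : W₁ ⊔ W₂ = ⊤)
    (hW₁ : n - Z ≤ Module.finrank ℝ ↥W₁)
    (hW₂ : n - Z ≤ Module.finrank ℝ ↥W₂)
    (hplus : Module.finrank ℝ ↥(V₃ ⊔ V₄) ≤ 3 * Z)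
    (hspan3 : V₃ = (W₁ ⊓ V₃) ⊔ (V₃ ⊓ V₄))
    (hspan4 : V₄ = (W₂ ⊓ V₄) ⊔ (V₃ ⊓ V₄)) :
    ∃ A B C : Submodule ℝ (Fin n → ℝ),
      A ≤ W₁ ∧ B ≤ W₂ ∧
      Module.finrank ℝ ↥A ≤ Z ∧ Module.finrank ℝ ↥B ≤ Z ∧
      Module.finrank ℝ ↥C ≤ Z ∧
      A ⊔ C = V₃ ∧ B ⊔ C = V₄ := by
  classical
  have htop : finrank ℝ (Fin n → ℝ) = n := by
    simp [Module.finrank_pi]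
  have hrank_le : ∀ S : Submodule ℝ (Fin n → ℝ), finrank ℝ ↥S ≤ n := by
    intro S
    have := Submodule.finrank_le S
    omega
  set m : ℕ := min (2 * Z) n with hm
  -- dimension of D := V₃ ⊓ V₄
  have hVsum : finrank ℝ ↥(V₃ ⊔ V₄) + finrank ℝ ↥(V₃ ⊓ V₄) = m + m := by
    have := Submodule.finrank_sup_add_finrank_inf_eq V₃ V₄
    rw [hV₃, hV₄] at this
    omega
  have hDm : m ≤ finrank ℝ ↥(V₃ ⊓ V₄) + Z := by
    have h1 := hrank_le (V₃ ⊔ V₄)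
    have hmle : m ≤ 2 * Z := by omega
    have hmle' : m ≤ n := by omega
    by_cases hc : 2 * Z ≤ n
    · have : m = 2 * Z := by omega
      omega
    · have : m = n := by omega
      omega
  -- codimension bounds for W ⊓ (V₃ ⊓ V₄) inside V₃ ⊓ V₄
  have hE : ∀ W : Submodule ℝ (Fin n → ℝ), n - Z ≤ finrank ℝ ↥W →
      finrank ℝ ↥(V₃ ⊓ V₄) - finrank ℝ ↥(W ⊓ (V₃ ⊓ V₄)) ≤ Z := by
    intro W hWr
    have h1 := Submodule.finrank_sup_add_finrank_inf_eq W (V₃ ⊓ V₄)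
    have h2 := hrank_le (W ⊔ (V₃ ⊓ V₄))
    have h3 := hrank_le (V₃ ⊓ V₄)
    omega
  obtain ⟨C₀, hC₀D, hC₀₁, hC₀₂, hC₀rank⟩ :=
    aux_common_cospan Z (W₁ ⊓ (V₃ ⊓ V₄)) (W₂ ⊓ (V₃ ⊓ V₄)) (V₃ ⊓ V₄)
      inf_le_right inf_le_right (hE W₁ hW₁) (hE W₂ hW₂)
  -- enlarge C₀ to dimension max (finrank C₀) (m - Z)
  have hC₀le : finrank ℝ ↥C₀ ≤ finrank ℝ ↥(V₃ ⊓ V₄) := Submodule.finrank_mono hC₀D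
  obtain ⟨C, hC₀C, hCD, hCrank⟩ :=
    aux_grow ((m - Z) - finrank ℝ ↥C₀) C₀ (V₃ ⊓ V₄) hC₀D (by omega)
  have hCrank' : finrank ℝ ↥C ≤ Z := by omega
  have hCrankge : m ≤ finrank ℝ ↥C + Z := by omega
  -- C sups with W₁ ⊓ V₃ to V₃
  have hsup3 : (W₁ ⊓ V₃) ⊔ C = V₃ := by
    apply le_antisymm
    · exact sup_le inf_le_right (hCD.trans inf_le_left)
    · have hDle : V₃ ⊓ V₄ ≤ (W₁ ⊓ V₃) ⊔ C := by
        rw [← hC₀₁]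
        exact sup_le ((inf_le_inf_left W₁ inf_le_left).trans le_sup_left)
          (hC₀C.trans le_sup_right)
      calc V₃ = (W₁ ⊓ V₃) ⊔ (V₃ ⊓ V₄) := hspan3
        _ ≤ (W₁ ⊓ V₃) ⊔ ((W₁ ⊓ V₃) ⊔ C) := sup_le_sup_left hDle _
        _ = (W₁ ⊓ V₃) ⊔ C := by rw [← sup_assoc, sup_idem]
  have hsup4 : (W₂ ⊓ V₄) ⊔ C = V₄ := by
    apply le_antisymm
    · exact sup_le inf_le_right (hCD.trans inf_le_right)
    · have hDle : V₃ ⊓ V₄ ≤ (W₂ ⊓ V₄) ⊔ C := by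
        rw [← hC₀₂]
        exact sup_le ((inf_le_inf_left W₂ inf_le_right).trans le_sup_left)
          (hC₀C.trans le_sup_right)
      calc V₄ = (W₂ ⊓ V₄) ⊔ (V₃ ⊓ V₄) := hspan4
        _ ≤ (W₂ ⊓ V₄) ⊔ ((W₂ ⊓ V₄) ⊔ C) := sup_le_sup_left hDle _
        _ = (W₂ ⊓ V₄) ⊔ C := by rw [← sup_assoc, sup_idem]
  obtain ⟨A, hAP, hAC, hArank⟩ := aux_min_complement (W₁ ⊓ V₃) C V₃ hsup3
  obtain ⟨B, hBP, hBC, hBrank⟩ := aux_min_complement (W₂ ⊓ V₄) C V₄ hsup4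
  refine ⟨A, B, C, hAP.trans inf_le_left, hBP.trans inf_le_left,
    ?_, ?_, hCrank', hAC, hBC⟩
  · rw [hV₃] at hArank; omega
  · rw [hV₄] at hBrank; omega
end

section
/- For every coding scheme (i.e., all choices of encoder matrices E^{(1,3)}, E^{(1,5)}, E^{(2,4)}, E^{(2,5)}, E^{(5,6)} and decoder matrices D^{(3)}, D^{(4)}), the total loss satisfies L_total ≥ L_lb, where L_lb = Σ_{i∈{3,4}} Σ_{j=2Z+1}^{n} μ^{(i)}_j. -/
/-!
Writing `Ψ = L Lᵀ`, each task loss is `‖K L - (K D) (M L)‖_F²` with `M L` of rank at most `2Z`,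
so it suffices to prove an Eckart–Young lower bound. If the rows of `V` are an orthonormal
basis of `ker (M L)`, of dimension `d ≥ n - 2Z`, then projecting onto `ker (M L)` can only
decrease the Frobenius norm and kills `(K D) (M L)`, leaving `‖K L Vᵀ‖_F² = ∑ⱼ μⱼ tⱼ`, where
`tⱼ ∈ [0, 1]` is the squared length of the projection of the `j`-th eigenvector and `∑ⱼ tⱼ = d`.
Since the `μⱼ` are nonnegative and decreasing, such a weighted sum is at least the sum of the
`n - 2Z` smallest of them.
-/

open Matrix

/-- `P₁ ∈ ℝ^{a×n}`: selects the first `a` coordinates. -/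
def selectFirst (a n : ℕ) : Matrix (Fin a) (Fin n) ℝ :=
  Matrix.of fun i j => if (i : ℕ) = (j : ℕ) then 1 else 0

/-- `P₂ ∈ ℝ^{b×n}`: selects the last `b` coordinates. -/
def selectLast (b n : ℕ) : Matrix (Fin b) (Fin n) ℝ :=
  Matrix.of fun i j => if (i : ℕ) + (n - b) = (j : ℕ) then 1 else 0

/-- Total loss `L_total = L⁽³⁾ + L⁽⁴⁾` of a coding scheme for the butterfly
network, where `M⁽³⁾` stacks `E¹³P₁` on top of `E⁵⁶ [E¹⁵P₁; E²⁵P₂]` and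
`M⁽⁴⁾` stacks `E²⁴P₂` on top of the same middle-edge block, and
`L⁽ⁱ⁾ = Tr (Kⁱ (I - Dⁱ Mⁱ) Ψ (I - Dⁱ Mⁱ)ᵀ Kⁱᵀ)`. -/
noncomputable def totalLoss {n a b Z m₃ m₄ : ℕ}
    (Ψ : Matrix (Fin n) (Fin n) ℝ)
    (K3 : Matrix (Fin m₃) (Fin n) ℝ) (K4 : Matrix (Fin m₄) (Fin n) ℝ)
    (E13 E15 : Matrix (Fin Z) (Fin a) ℝ) (E24 E25 : Matrix (Fin Z) (Fin b) ℝ)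
    (E56 : Matrix (Fin Z) (Fin Z ⊕ Fin Z) ℝ)
    (D3 D4 : Matrix (Fin n) (Fin Z ⊕ Fin Z) ℝ) : ℝ :=
  let P1 := selectFirst a n
  let P2 := selectLast b n
  let mid : Matrix (Fin Z) (Fin n) ℝ := E56 * Matrix.fromRows (E15 * P1) (E25 * P2)
  let M3 : Matrix (Fin Z ⊕ Fin Z) (Fin n) ℝ := Matrix.fromRows (E13 * P1) mid
  let M4 : Matrix (Fin Z ⊕ Fin Z) (Fin n) ℝ := Matrix.fromRows (E24 * P2) mid
  (K3 * (1 - D3 * M3) * Ψ * (1 - D3 * M3)ᵀ * K3ᵀ).trace +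
    (K4 * (1 - D4 * M4) * Ψ * (1 - D4 * M4)ᵀ * K4ᵀ).trace

open Finset

theorem sum_Ici_le_sum_mul_of_antitone {ι : Type*} [Fintype ι] [LinearOrder ι]
    [LocallyFiniteOrderTop ι] {f t : ι → ℝ} (hf : Antitone f) (k : ι) (hfk : 0 ≤ f k)
    (ht0 : ∀ j, 0 ≤ t j) (ht1 : ∀ j, t j ≤ 1) (hcard : (#(Ici k) : ℝ) ≤ ∑ j, t j) :
    ∑ j ∈ Ici k, f j ≤ ∑ j, f j * t j := by
  -- Each term satisfies `(f j - f k) * (𝟙[k ≤ j] - t j) ≤ 0`, and `∑ j, (t j - 𝟙[k ≤ j]) ≥ 0`.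
  have termwise : ∀ j, (if k ≤ j then f j else 0) + f k * (t j - if k ≤ j then 1 else 0) ≤
      f j * t j := by
    intro j
    by_cases hj : k ≤ j
    · simp only [hj, if_true]
      nlinarith [hf hj, ht1 j]
    · simp only [hj, if_false]
      nlinarith [hf (le_of_not_ge hj), ht0 j]
  have hsum := Finset.sum_le_sum fun j (_ : j ∈ univ) => termwise j
  rw [sum_add_distrib, ← mul_sum, sum_sub_distrib, ← sum_filter, ← sum_filter, sum_const,
    nsmul_one] at hsum
  have hfilter : univ.filter (k ≤ ·) = Ici k := by ext; simp
  rw [hfilter] at hsum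
  nlinarith

theorem antitone_fin_of_succ_le {n : ℕ} (μ : ℕ → ℝ)
    (hdesc : ∀ i, 1 ≤ i → i < n → μ (i + 1) ≤ μ i) :
    Antitone fun j : Fin n => μ ((j : ℕ) + 1) := by
  cases n with
  | zero => exact fun i => i.elim0
  | succ n => exact Fin.antitone_iff_succ_le.2 fun i => hdesc (i + 1) (by omega) (by simp)

theorem sum_Icc_eq_sum_Ici {n : ℕ} (μ : ℕ → ℝ) (k : Fin n) :
    ∑ j ∈ Icc ((k : ℕ) + 1) n, μ j = ∑ j ∈ Ici k, μ ((j : ℕ) + 1) := by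
  rw [← Ico_add_one_right_eq_Icc, ← sum_Ico_add', ← Fin.map_valEmbedding_Ici, sum_map]
  rfl

theorem sum_Icc_le_sum_mul {n r : ℕ} (μ : ℕ → ℝ) (hdesc : ∀ i, 1 ≤ i → i < n → μ (i + 1) ≤ μ i)
    (hμ : ∀ j : Fin n, 0 ≤ μ ((j : ℕ) + 1)) {t : Fin n → ℝ} (ht0 : ∀ j, 0 ≤ t j)
    (ht1 : ∀ j, t j ≤ 1)
    (hsum : (n : ℝ) ≤ ∑ j, t j + r) :
    ∑ j ∈ Icc (r + 1) n, μ j ≤ ∑ j : Fin n, μ ((j : ℕ) + 1) * t j := by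
  rcases lt_or_ge r n with hr | hr
  · rw [sum_Icc_eq_sum_Ici μ ⟨r, hr⟩]
    refine sum_Ici_le_sum_mul_of_antitone (antitone_fin_of_succ_le μ hdesc) _ (hμ _) ht0 ht1 ?_
    rw [Fin.card_Ici, Nat.cast_sub hr.le]
    linarith
  · rw [Icc_eq_empty (by omega), sum_empty]
    exact sum_nonneg fun j _ => mul_nonneg (hμ j) (ht0 j)

section
variable {m κ : Type*} [Fintype κ]

theorem mul_transpose_self_diag_nonneg (Y : Matrix m κ ℝ) (j : m) : 0 ≤ (Y * Yᵀ) j j := by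
  simp only [mul_apply, transpose_apply]
  exact sum_nonneg fun _ _ => mul_self_nonneg _

theorem mul_transpose_sub_mul_transpose_eq {d : Type*} [Fintype d] [DecidableEq d]
    (X : Matrix m κ ℝ) (V : Matrix d κ ℝ) (hV : V * Vᵀ = 1) :
    X * Xᵀ - (X * Vᵀ) * (X * Vᵀ)ᵀ = (X - X * Vᵀ * V) * (X - X * Vᵀ * V)ᵀ := by
  have h : X * Vᵀ * V * (X * Vᵀ * V)ᵀ = (X * Vᵀ) * (X * Vᵀ)ᵀ := by
    simp only [transpose_mul, Matrix.mul_assoc]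
    rw [← Matrix.mul_assoc V, hV, Matrix.one_mul]
  rw [transpose_sub, Matrix.mul_sub, Matrix.sub_mul, Matrix.sub_mul, h]
  simp only [transpose_mul, Matrix.mul_assoc]
  abel

theorem mul_transpose_diag_le {d : Type*} [Fintype d] [DecidableEq d]
    (X : Matrix m κ ℝ) {V : Matrix d κ ℝ} (hV : V * Vᵀ = 1) (j : m) :
    ((X * Vᵀ) * (X * Vᵀ)ᵀ) j j ≤ (X * Xᵀ) j j := by
  have h := mul_transpose_self_diag_nonneg (X - X * Vᵀ * V) j
  rw [← mul_transpose_sub_mul_transpose_eq X V hV, Matrix.sub_apply] at h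
  linarith

theorem trace_mul_transpose_le [Fintype m] {d : Type*} [Fintype d] [DecidableEq d]
    (X : Matrix m κ ℝ) {V : Matrix d κ ℝ} (hV : V * Vᵀ = 1) :
    ((X * Vᵀ) * (X * Vᵀ)ᵀ).trace ≤ (X * Xᵀ).trace :=
  sum_le_sum fun j _ => mul_transpose_diag_le X hV j

end

theorem exists_orthonormal_rows_mul_transpose_eq_zero {ι κ : Type*} [Fintype ι] [Fintype κ]
    [DecidableEq κ] (N : Matrix ι κ ℝ) :
    ∃ (d : ℕ) (V : Matrix (Fin d) κ ℝ),
      Fintype.card κ ≤ d + Fintype.card ι ∧ V * Vᵀ = 1 ∧ N * Vᵀ = 0 := by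
  set K : Submodule ℝ (EuclideanSpace ℝ κ) :=
    (LinearMap.ker N.mulVecLin).comap (WithLp.linearEquiv 2 ℝ (κ → ℝ)).toLinearMap with hKdef
  have hK : Module.finrank ℝ K = Module.finrank ℝ (LinearMap.ker N.mulVecLin) := by
    rw [hKdef, Submodule.comap_equiv_eq_map_symm]
    exact LinearEquiv.finrank_map_eq _ _
  have hrank : Module.finrank ℝ (LinearMap.range N.mulVecLin) ≤ Fintype.card ι := by
    simpa [Matrix.rank] using N.rank_le_card_height
  have hdim := LinearMap.finrank_range_add_finrank_ker N.mulVecLin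
  rw [Module.finrank_fintype_fun_eq_card] at hdim
  let b := stdOrthonormalBasis ℝ K
  refine ⟨Module.finrank ℝ K, Matrix.of fun i => (b i : EuclideanSpace ℝ κ).ofLp, by omega, ?_, ?_⟩
  · ext i k
    have h := orthonormal_iff_ite.1 b.orthonormal i k
    rw [Submodule.coe_inner, EuclideanSpace.inner_eq_star_dotProduct, dotProduct_comm] at h
    simpa [Matrix.mul_apply, Matrix.one_apply, dotProduct] using h
  · ext k i
    have h := congrFun (LinearMap.mem_ker.mp (Submodule.mem_comap.mp (b i).2)) k
    simpa [Matrix.mul_apply, Matrix.mulVec, dotProduct] using h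

theorem eq_transpose_mul_diagonal_mul_of_mulVec_eq_smul {κ : Type*} [Fintype κ] [DecidableEq κ]
    {S : Matrix κ κ ℝ} {u : κ → κ → ℝ} {lam : κ → ℝ} (hU : of u * (of u)ᵀ = 1)
    (heig : ∀ i, S *ᵥ u i = lam i • u i) :
    S = (of u)ᵀ * diagonal lam * of u := by
  have hcols : S * (of u)ᵀ = (of u)ᵀ * diagonal lam := by
    ext i j
    rw [mul_diagonal]
    simpa [mulVec, dotProduct, mul_apply, mul_comm] using congrFun (heig j) i
  rw [← hcols, Matrix.mul_assoc, mul_eq_one_comm.mp hU, Matrix.mul_one]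

theorem of_mul_transpose_eq_one {κ : Type*} [Fintype κ] [DecidableEq κ] {u : κ → κ → ℝ}
    (horth : ∀ i j, u i ⬝ᵥ u j = if i = j then 1 else 0) : of u * (of u)ᵀ = 1 := by
  ext i j
  simpa [mul_apply, one_apply, dotProduct] using horth i j

theorem nonneg_of_transpose_mul_self_mulVec_eq_smul {m κ : Type*} [Fintype m] [Fintype κ]
    {A : Matrix m κ ℝ} {v : κ → ℝ} {c : ℝ} (hv : v ⬝ᵥ v = 1) (heig : (Aᵀ * A) *ᵥ v = c • v) :
    0 ≤ c := by
  have h := (posSemidef_conjTranspose_mul_self A).dotProduct_mulVec_nonneg v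
  rwa [conjTranspose_eq_transpose_of_trivial, heig, star_trivial, dotProduct_smul, hv,
    smul_eq_mul, mul_one] at h

theorem trace_mul_mul_transpose_eq_sum {m κ d : Type*} [Fintype m] [Fintype κ] [Fintype d]
    [DecidableEq κ] {A : Matrix m κ ℝ} {U : Matrix κ κ ℝ} {lam : κ → ℝ}
    (hA : Aᵀ * A = Uᵀ * diagonal lam * U) (W : Matrix κ d ℝ) :
    ((A * W) * (A * W)ᵀ).trace = ∑ j, lam j * ((U * W) * (U * W)ᵀ) j j := by
  have h : (A * W)ᵀ * (A * W) = (U * W)ᵀ * (diagonal lam * (U * W)) := by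
    simp only [transpose_mul, Matrix.mul_assoc]
    rw [← Matrix.mul_assoc Aᵀ, hA]
    simp only [Matrix.mul_assoc]
  rw [trace_mul_comm, h, trace_mul_comm, Matrix.mul_assoc, trace]
  simp [diagonal_mul]

theorem sum_Icc_le_trace_sub_mul_mul_transpose {m ι : Type*} [Fintype m] [Fintype ι] {n : ℕ}
    (A : Matrix m (Fin n) ℝ) (C : Matrix m ι ℝ) (N : Matrix ι (Fin n) ℝ) (μ : ℕ → ℝ)
    (u : Fin n → Fin n → ℝ) (hdesc : ∀ i, 1 ≤ i → i < n → μ (i + 1) ≤ μ i)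
    (horth : ∀ i j, u i ⬝ᵥ u j = if i = j then 1 else 0)
    (heig : ∀ i : Fin n, (Aᵀ * A) *ᵥ u i = μ ((i : ℕ) + 1) • u i) :
    ∑ j ∈ Icc (Fintype.card ι + 1) n, μ j ≤ ((A - C * N) * (A - C * N)ᵀ).trace := by
  obtain ⟨d, V, hd, hV, hNV⟩ := exists_orthonormal_rows_mul_transpose_eq_zero N
  rw [Fintype.card_fin] at hd
  have hU := of_mul_transpose_eq_one horth
  have hA := eq_transpose_mul_diagonal_mul_of_mulVec_eq_smul hU heig
  have hμ : ∀ j : Fin n, 0 ≤ μ ((j : ℕ) + 1) := fun j =>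
    nonneg_of_transpose_mul_self_mulVec_eq_smul (by simpa using horth j j) (heig j)
  set t : Fin n → ℝ := fun j => ((of u * Vᵀ) * (of u * Vᵀ)ᵀ) j j
  have ht1 : ∀ j, t j ≤ 1 := fun j => by
    simpa [t, hU] using mul_transpose_diag_le (of u) hV j
  have htsum : ∑ j, t j = d := by
    change ((of u * Vᵀ) * (of u * Vᵀ)ᵀ).trace = d
    rw [trace_mul_comm, transpose_mul, transpose_transpose, Matrix.mul_assoc,
      ← Matrix.mul_assoc (of u)ᵀ, mul_eq_one_comm.mp hU, Matrix.one_mul, hV, trace_one,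
      Fintype.card_fin]
  calc ∑ j ∈ Icc (Fintype.card ι + 1) n, μ j
      ≤ ∑ j : Fin n, μ ((j : ℕ) + 1) * t j :=
        sum_Icc_le_sum_mul μ hdesc hμ (fun j => mul_transpose_self_diag_nonneg _ j) ht1
          (by rw [htsum]; exact_mod_cast hd)
    _ = ((A * Vᵀ) * (A * Vᵀ)ᵀ).trace := (trace_mul_mul_transpose_eq_sum hA Vᵀ).symm
    _ = (((A - C * N) * Vᵀ) * ((A - C * N) * Vᵀ)ᵀ).trace := by
        rw [Matrix.sub_mul, Matrix.mul_assoc C, hNV, Matrix.mul_zero, sub_zero]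
    _ ≤ ((A - C * N) * (A - C * N)ᵀ).trace := trace_mul_transpose_le _ hV

theorem sum_Icc_le_trace_task_loss {m ι : Type*} [Fintype m] [Fintype ι] {n : ℕ}
    (L : Matrix (Fin n) (Fin n) ℝ) (K : Matrix m (Fin n) ℝ) (D : Matrix (Fin n) ι ℝ)
    (M : Matrix ι (Fin n) ℝ) (μ : ℕ → ℝ) (u : Fin n → Fin n → ℝ)
    (hdesc : ∀ i, 1 ≤ i → i < n → μ (i + 1) ≤ μ i)
    (horth : ∀ i j, u i ⬝ᵥ u j = if i = j then 1 else 0)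
    (heig : ∀ i : Fin n, (Lᵀ * Kᵀ * K * L) *ᵥ u i = μ ((i : ℕ) + 1) • u i) :
    ∑ j ∈ Icc (Fintype.card ι + 1) n, μ j ≤
      (K * (1 - D * M) * (L * Lᵀ) * (1 - D * M)ᵀ * Kᵀ).trace := by
  have hKL : (K * L)ᵀ * (K * L) = Lᵀ * Kᵀ * K * L := by
    simp only [transpose_mul, Matrix.mul_assoc]
  have hloss : K * (1 - D * M) * (L * Lᵀ) * (1 - D * M)ᵀ * Kᵀ =
      (K * L - (K * D) * (M * L)) * (K * L - (K * D) * (M * L))ᵀ := by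
    simp only [transpose_sub, transpose_mul, transpose_one, Matrix.mul_sub, Matrix.sub_mul,
      Matrix.mul_one, Matrix.mul_assoc]
  rw [hloss]
  exact sum_Icc_le_trace_sub_mul_mul_transpose (K * L) (K * D) (M * L) μ u hdesc horth
    (by simpa only [hKL] using heig)

theorem butterfly_total_loss_lower_bound_general
    (n a b Z m₃ m₄ : ℕ)
    (Ψ L : Matrix (Fin n) (Fin n) ℝ) (hChol : Ψ = L * Lᵀ)
    (K3 : Matrix (Fin m₃) (Fin n) ℝ) (K4 : Matrix (Fin m₄) (Fin n) ℝ)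
    (μ3 μ4 : ℕ → ℝ) (u3 u4 : Fin n → (Fin n → ℝ))
    (hdesc3 : ∀ i : ℕ, 1 ≤ i → i < n → μ3 (i + 1) ≤ μ3 i)
    (horth3 : ∀ i j : Fin n, dotProduct (u3 i) (u3 j) = if i = j then 1 else 0)
    (heig3 : ∀ i : Fin n, (Lᵀ * K3ᵀ * K3 * L).mulVec (u3 i) = μ3 ((i : ℕ) + 1) • u3 i)
    (hdesc4 : ∀ i : ℕ, 1 ≤ i → i < n → μ4 (i + 1) ≤ μ4 i)
    (horth4 : ∀ i j : Fin n, dotProduct (u4 i) (u4 j) = if i = j then 1 else 0)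
    (heig4 : ∀ i : Fin n, (Lᵀ * K4ᵀ * K4 * L).mulVec (u4 i) = μ4 ((i : ℕ) + 1) • u4 i) :
    ∀ (E13 E15 : Matrix (Fin Z) (Fin a) ℝ) (E24 E25 : Matrix (Fin Z) (Fin b) ℝ)
      (E56 : Matrix (Fin Z) (Fin Z ⊕ Fin Z) ℝ)
      (D3 D4 : Matrix (Fin n) (Fin Z ⊕ Fin Z) ℝ),
      totalLoss Ψ K3 K4 E13 E15 E24 E25 E56 D3 D4 ≥
        (∑ j ∈ Finset.Icc (2 * Z + 1) n, μ3 j) +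
          (∑ j ∈ Finset.Icc (2 * Z + 1) n, μ4 j) := by
  intro E13 E15 E24 E25 E56 D3 D4
  subst hChol
  have hcard : Fintype.card (Fin Z ⊕ Fin Z) = 2 * Z := by simp [two_mul]
  rw [← hcard]
  exact add_le_add (sum_Icc_le_trace_task_loss L K3 D3 _ μ3 u3 hdesc3 horth3 heig3)
    (sum_Icc_le_trace_task_loss L K4 D4 _ μ4 u4 hdesc4 horth4 heig4)

/-- lower bound for the butterfly-network task-aware coding
problem: every coding scheme has total loss at least
`L_lb = Σ_{i∈{3,4}} Σ_{j=2Z+1}^{n} μ⁽ⁱ⁾_j`, where `μ⁽ⁱ⁾₁ ≥ ⋯ ≥ μ⁽ⁱ⁾_n` are the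
eigenvalues of the Gram matrix `S⁽ⁱ⁾ = Lᵀ K⁽ⁱ⁾ᵀ K⁽ⁱ⁾ L` (1-indexed via
`μ3, μ4 : ℕ → ℝ`, with orthonormal eigenvectors `u3, u4`). -/
theorem butterfly_total_loss_lower_bound
    (n a b Z m₃ m₄ : ℕ)
    (hn : 0 < n) (ha : 0 < a) (hb : 0 < b) (hZ : 0 < Z) (hm₃ : 0 < m₃) (hm₄ : 0 < m₄)
    (hZn : Z ≤ n) (han : a ≤ n) (hbn : b ≤ n) (hnab : n ≤ a + b)
    (Ψ L : Matrix (Fin n) (Fin n) ℝ) (hΨ : Ψ.PosDef) (hChol : Ψ = L * Lᵀ)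
    (hLtri : ∀ i j : Fin n, i < j → L i j = 0) (hLdiag : ∀ i : Fin n, 0 < L i i)
    (K3 : Matrix (Fin m₃) (Fin n) ℝ) (K4 : Matrix (Fin m₄) (Fin n) ℝ)
    (μ3 μ4 : ℕ → ℝ) (u3 u4 : Fin n → (Fin n → ℝ))
    (hdesc3 : ∀ i : ℕ, 1 ≤ i → i < n → μ3 (i + 1) ≤ μ3 i) (hzero3 : μ3 (n + 1) = 0)
    (horth3 : ∀ i j : Fin n, dotProduct (u3 i) (u3 j) = if i = j then 1 else 0)
    (heig3 : ∀ i : Fin n, (Lᵀ * K3ᵀ * K3 * L).mulVec (u3 i) = μ3 ((i : ℕ) + 1) • u3 i)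
    (hdesc4 : ∀ i : ℕ, 1 ≤ i → i < n → μ4 (i + 1) ≤ μ4 i) (hzero4 : μ4 (n + 1) = 0)
    (horth4 : ∀ i j : Fin n, dotProduct (u4 i) (u4 j) = if i = j then 1 else 0)
    (heig4 : ∀ i : Fin n, (Lᵀ * K4ᵀ * K4 * L).mulVec (u4 i) = μ4 ((i : ℕ) + 1) • u4 i) :
    ∀ (E13 E15 : Matrix (Fin Z) (Fin a) ℝ) (E24 E25 : Matrix (Fin Z) (Fin b) ℝ)
      (E56 : Matrix (Fin Z) (Fin Z ⊕ Fin Z) ℝ)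
      (D3 D4 : Matrix (Fin n) (Fin Z ⊕ Fin Z) ℝ),
      totalLoss Ψ K3 K4 E13 E15 E24 E25 E56 D3 D4 ≥
        (∑ j ∈ Finset.Icc (2 * Z + 1) n, μ3 j) +
          (∑ j ∈ Finset.Icc (2 * Z + 1) n, μ4 j) :=
  butterfly_total_loss_lower_bound_general n a b Z m₃ m₄ Ψ L hChol K3 K4 μ3 μ4 u3 u4 hdesc3 horth3
    heig3 hdesc4 horth4 heig4
end

section
/- Let Z be a positive integer with Z ≤ n and suppose the eigen-gap μ_Z − μ_{Z+1} > 0. If an encoder E ∈ ℝ^{Z×n} and decoder D ∈ ℝ^{n×Z} satisfy Tr(K(I − DE) Ψ (I − DE)ᵀ Kᵀ) = Σ_{i=Z+1}^{n} μᵢ, then the column space of Eᵀ equals the span of {L^{−ᵀ}u₁, L^{−ᵀ}u₂, …, L^{−ᵀ}u_Z}. -/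
/-!
Write `Ψ = L Lᵀ`, `S = Lᵀ Kᵀ K L` and `X = L⁻¹ (1 - D E) L = 1 - (L⁻¹ D) (E L)`. The loss is
`Tr (Xᵀ S X) = Σ_j μ_j ‖Xᵀ u_j‖²`, and `u_j - Xᵀ u_j` lies in the row space `V` of `E L`, of
dimension at most `Z`. Hence `‖Xᵀ u_j‖² ≥ d_j`, the squared distance from `u_j` to `V`, while
Bessel's inequality gives `Σ_j (1 - d_j) ≤ Z`. Under these constraints
`Σ_j μ_j d_j ≥ Σ_{j > Z} μ_j + (μ_Z - μ_{Z+1}) Σ_{j ≤ Z} d_j`, so an optimal pair with a positive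
eigen-gap has `d_j = 0`, i.e. `u_j ∈ V`, for `j ≤ Z`. Then `L⁻ᵀ u_1, …, L⁻ᵀ u_Z` are `Z`
independent vectors in the column space of `Eᵀ`, whose dimension is at most `Z`.
-/

open Matrix
open scoped RealInnerProductSpace

theorem eq_zero_of_sum_mul_le_sum_compl {ι : Type*} [Fintype ι] [DecidableEq ι] (A : Finset ι)
    {ν d : ι → ℝ} {a c : ℝ} (hc : 0 ≤ c) (hca : c < a) (hνA : ∀ j ∈ A, a ≤ ν j)
    (hνAc : ∀ j ∉ A, ν j ≤ c) (hd0 : ∀ j, 0 ≤ d j) (hd1 : ∀ j, d j ≤ 1)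
    (hsum : ∑ j, (1 - d j) ≤ A.card) (hle : ∑ j, ν j * d j ≤ ∑ j ∈ Aᶜ, ν j) :
    ∀ j ∈ A, d j = 0 := by
  have hA : a * ∑ j ∈ A, d j ≤ ∑ j ∈ A, ν j * d j := by
    rw [Finset.mul_sum]
    exact Finset.sum_le_sum fun j hj => mul_le_mul_of_nonneg_right (hνA j hj) (hd0 j)
  have hAc : ∑ j ∈ Aᶜ, ν j * (1 - d j) ≤ c * ∑ j ∈ Aᶜ, (1 - d j) := by
    rw [Finset.mul_sum]
    exact Finset.sum_le_sum fun j hj =>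
      mul_le_mul_of_nonneg_right (hνAc j (Finset.mem_compl.mp hj)) (sub_nonneg.mpr (hd1 j))
  have hcount : ∑ j ∈ Aᶜ, (1 - d j) ≤ ∑ j ∈ A, d j := by
    have hA1 : ∑ j ∈ A, (1 - d j) = A.card - ∑ j ∈ A, d j := by simp [Finset.sum_sub_distrib]
    rw [← Finset.sum_add_sum_compl A, hA1] at hsum
    linarith
  have hsplit := Finset.sum_add_sum_compl A (fun j => ν j * d j)
  have hcompl : ∑ j ∈ Aᶜ, ν j * (1 - d j) = ∑ j ∈ Aᶜ, ν j - ∑ j ∈ Aᶜ, ν j * d j := by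
    simp only [mul_sub, mul_one, Finset.sum_sub_distrib]
  have hnonpos : (a - c) * ∑ j ∈ A, d j ≤ 0 := by
    linarith [mul_le_mul_of_nonneg_left hcount hc]
  have hzero : ∑ j ∈ A, d j = 0 :=
    le_antisymm (nonpos_of_mul_nonpos_right hnonpos (sub_pos.mpr hca))
      (Finset.sum_nonneg fun j _ => hd0 j)
  exact (Finset.sum_eq_zero_iff_of_nonneg fun j _ => hd0 j).mp hzero

section Projection

variable {E ι : Type*} [NormedAddCommGroup E] [InnerProductSpace ℝ E] [Fintype ι] {u : ι → E}

theorem Orthonormal.sum_norm_sq_starProjection_le_finrank (hu : Orthonormal ℝ u)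
    (V : Submodule ℝ E) [FiniteDimensional ℝ V] :
    ∑ j, ‖V.starProjection (u j)‖ ^ 2 ≤ Module.finrank ℝ V := by
  let e := stdOrthonormalBasis ℝ V
  have hparseval : ∀ x : E, ‖V.starProjection x‖ ^ 2 = ∑ k, ⟪x, e k⟫ ^ 2 := fun x => by
    rw [Submodule.starProjection_apply, Submodule.norm_coe, ← e.sum_sq_inner_right]
    simp_rw [Submodule.inner_orthogonalProjectionOnto_eq_of_mem_left,
      real_inner_comm]
  calc ∑ j, ‖V.starProjection (u j)‖ ^ 2 = ∑ k, ∑ j, ⟪u j, e k⟫ ^ 2 := by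
        simp_rw [hparseval]; exact Finset.sum_comm
    _ ≤ ∑ k, (1 : ℝ) := by
        gcongr with k
        have hek : ‖(e k : E)‖ = 1 := e.orthonormal.1 k
        simpa [hek] using hu.sum_inner_products_le (e k : E) (s := Finset.univ)
    _ = Module.finrank ℝ V := by simp

theorem Orthonormal.mem_of_sum_mul_norm_sq_le [DecidableEq ι] (hu : Orthonormal ℝ u)
    {V : Submodule ℝ E} [FiniteDimensional ℝ V] (A : Finset ι) (hV : Module.finrank ℝ V ≤ A.card)
    {ν : ι → ℝ} (hν : ∀ j, 0 ≤ ν j) {a c : ℝ} (hc : 0 ≤ c) (hca : c < a)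
    (hνA : ∀ j ∈ A, a ≤ ν j) (hνAc : ∀ j ∉ A, ν j ≤ c) {w : ι → E} (hw : ∀ j, u j - w j ∈ V)
    (hle : ∑ j, ν j * ‖w j‖ ^ 2 ≤ ∑ j ∈ Aᶜ, ν j) :
    ∀ j ∈ A, u j ∈ V := by
  have hpyth j : ‖V.starProjection (u j)‖ ^ 2 + ‖Vᗮ.starProjection (u j)‖ ^ 2 = 1 := by
    rw [← Submodule.norm_sq_eq_add_norm_sq_starProjection, hu.1 j, one_pow]
  have hdist j : ‖Vᗮ.starProjection (u j)‖ ^ 2 ≤ ‖w j‖ ^ 2 := by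
    have hperp : Vᗮ.starProjection (u j) = Vᗮ.starProjection (w j) := by
      rw [← sub_eq_zero, ← map_sub, Submodule.starProjection_apply_eq_zero_iff,
        Submodule.orthogonal_orthogonal]
      exact hw j
    rw [hperp]
    gcongr
    exact Vᗮ.norm_starProjection_apply_le (w j)
  have hsum : ∑ j, (1 - ‖Vᗮ.starProjection (u j)‖ ^ 2) ≤ (A.card : ℝ) :=
    calc ∑ j, (1 - ‖Vᗮ.starProjection (u j)‖ ^ 2) = ∑ j, ‖V.starProjection (u j)‖ ^ 2 :=
          Finset.sum_congr rfl fun j _ => by linarith [hpyth j]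
      _ ≤ A.card := (hu.sum_norm_sq_starProjection_le_finrank V).trans (by exact_mod_cast hV)
  have hzero := eq_zero_of_sum_mul_le_sum_compl A hc hca hνA hνAc (fun j => by positivity)
    (fun j => by nlinarith [hpyth j]) hsum
    ((Finset.sum_le_sum fun j _ => mul_le_mul_of_nonneg_left (hdist j) (hν j)).trans hle)
  intro j hj
  rw [← Submodule.orthogonal_orthogonal V, ← Submodule.starProjection_apply_eq_zero_iff]
  simpa using hzero j hj

end Projection

theorem Submodule.eq_span_range_of_linearIndependent {K M ι : Type*} [DivisionRing K]
    [AddCommGroup M] [Module K M] [Fintype ι] {W : Submodule K M} [FiniteDimensional K W]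
    {v : ι → M} (hv : LinearIndependent K v) (hmem : ∀ i, v i ∈ W)
    (hW : Module.finrank K W ≤ Fintype.card ι) : W = Submodule.span K (Set.range v) :=
  (Submodule.eq_of_le_of_finrank_le (Submodule.span_le.mpr (Set.range_subset_iff.mpr hmem))
    (by rwa [finrank_span_eq_card hv])).symm

namespace Matrix

variable {ι : Type*} [Fintype ι]

theorem PosSemidef.nonneg_of_mulVec_eq_smul {S : Matrix ι ι ℝ} (hS : S.PosSemidef)
    {v : ι → ℝ} {c : ℝ} (hv : v ⬝ᵥ v = 1) (h : S *ᵥ v = c • v) : 0 ≤ c := by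
  simpa [h, hv] using hS.dotProduct_mulVec_nonneg v

variable [DecidableEq ι]

theorem mul_transpose_eq_one_of_orthonormal_rows {u : ι → ι → ℝ}
    (horth : ∀ i j, u i ⬝ᵥ u j = if i = j then 1 else 0) : of u * (of u)ᵀ = 1 := by
  ext i j
  simpa [mul_apply, one_apply, dotProduct] using horth i j

theorem trace_transpose_mul_mul_eq_sum_eigen {κ : Type*} [Fintype κ] {u : ι → ι → ℝ}
    (horth : ∀ i j, u i ⬝ᵥ u j = if i = j then 1 else 0) {S : Matrix ι ι ℝ} {ν : ι → ℝ}
    (heig : ∀ j, S *ᵥ u j = ν j • u j) (X : Matrix ι κ ℝ) :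
    (Xᵀ * S * X).trace = ∑ j, ν j * ((u j ᵥ* X) ⬝ᵥ (u j ᵥ* X)) := by
  set R := of u
  have hRtR : Rᵀ * R = 1 := mul_eq_one_comm.mp (mul_transpose_eq_one_of_orthonormal_rows horth)
  have hSR : S * Rᵀ = Rᵀ * diagonal ν := by
    ext i j
    rw [mul_diagonal]
    simpa [R, mul_apply, mulVec, dotProduct, mul_comm] using congrFun (heig j) i
  have hform : Xᵀ * S * X = (R * X)ᵀ * diagonal ν * (R * X) := by
    calc Xᵀ * S * X = Xᵀ * (S * (Rᵀ * R)) * X := by rw [hRtR, Matrix.mul_one]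
      _ = Xᵀ * Rᵀ * diagonal ν * (R * X) := by
          rw [← Matrix.mul_assoc S, hSR]; simp only [Matrix.mul_assoc]
      _ = (R * X)ᵀ * diagonal ν * (R * X) := by rw [transpose_mul]
  rw [hform, trace]
  simp only [diag_apply, mul_apply, diagonal_apply, transpose_apply, mul_ite, mul_zero,
    Finset.sum_ite_eq', Finset.mem_univ, if_true, dotProduct, vecMul, Finset.mul_sum]
  rw [Finset.sum_comm]
  refine Finset.sum_congr rfl fun j _ => Finset.sum_congr rfl fun k _ =>
    Finset.sum_congr rfl fun i _ => ?_
  simp only [R, of_apply]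
  ring

theorem trace_mul_mul_self_mul_transpose_mul {m : Type*} [Fintype m] (K : Matrix m ι ℝ)
    (B : Matrix ι ι ℝ) {L : Matrix ι ι ℝ} (hL : IsUnit L) :
    (K * B * (L * Lᵀ) * Bᵀ * Kᵀ).trace
      = ((L⁻¹ * B * L)ᵀ * (Lᵀ * Kᵀ * K * L) * (L⁻¹ * B * L)).trace := by
  have hC : K * L * (L⁻¹ * B * L) = K * B * L := by
    rw [Matrix.mul_assoc K, ← Matrix.mul_assoc L, ← Matrix.mul_assoc L,
      mul_nonsing_inv _ ((isUnit_iff_isUnit_det L).mp hL), Matrix.one_mul, Matrix.mul_assoc]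
  calc (K * B * (L * Lᵀ) * Bᵀ * Kᵀ).trace = ((K * B * L) * (K * B * L)ᵀ).trace := by
        simp only [transpose_mul, Matrix.mul_assoc]
    _ = ((K * B * L)ᵀ * (K * B * L)).trace := trace_mul_comm _ _
    _ = ((L⁻¹ * B * L)ᵀ * (Lᵀ * Kᵀ * K * L) * (L⁻¹ * B * L)).trace := by
        rw [← hC]; simp only [transpose_mul, Matrix.mul_assoc]

theorem mem_range_vecMul_of_trace_le {κ : Type*} [Fintype κ] {u : ι → ι → ℝ}
    (horth : ∀ i j, u i ⬝ᵥ u j = if i = j then 1 else 0) {S : Matrix ι ι ℝ} {ν : ι → ℝ}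
    (heig : ∀ j, S *ᵥ u j = ν j • u j) (hν : ∀ j, 0 ≤ ν j) (A : Finset ι)
    (hκ : Fintype.card κ ≤ A.card) {a c : ℝ} (hc : 0 ≤ c) (hca : c < a)
    (hνA : ∀ j ∈ A, a ≤ ν j) (hνAc : ∀ j ∉ A, ν j ≤ c) (F : Matrix ι κ ℝ) (P : Matrix κ ι ℝ)
    (hle : ((1 - F * P)ᵀ * S * (1 - F * P)).trace ≤ ∑ j ∈ Aᶜ, ν j) :
    ∀ j ∈ A, ∃ y, y ᵥ* P = u j := by
  let toE := (WithLp.linearEquiv 2 ℝ (ι → ℝ)).symm.toLinearMap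
  have hON : Orthonormal ℝ fun j => toE (u j) := by
    rw [orthonormal_iff_ite]
    intro i j
    simpa [toE, EuclideanSpace.inner_eq_star_dotProduct, dotProduct_comm] using horth i j
  have hV : Module.finrank ℝ (LinearMap.range (toE ∘ₗ P.vecMulLinear)) ≤ A.card :=
    (LinearMap.finrank_range_le _).trans (by rwa [Module.finrank_fintype_fun_eq_card])
  have hnorm : ∀ w : ι → ℝ, ‖toE w‖ ^ 2 = w ⬝ᵥ w := fun w => by
    rw [EuclideanSpace.real_norm_sq_eq]; simp [toE, dotProduct, sq]
  have hmem := hON.mem_of_sum_mul_norm_sq_le A hV hν hc hca hνA hνAc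
    (w := fun j => toE (u j ᵥ* (1 - F * P)))
    (fun j => ⟨u j ᵥ* F, by simp [toE, vecMul_sub, vecMul_vecMul]⟩)
    (by simpa only [hnorm, ← trace_transpose_mul_mul_eq_sum_eigen horth heig] using hle)
  intro j hj
  obtain ⟨y, hy⟩ := hmem j hj
  exact ⟨y, by simpa [toE] using hy⟩

end Matrix

theorem sum_Icc_succ_eq_sum_compl (μ : ℕ → ℝ) {Z n : ℕ} :
    ∑ i ∈ Finset.Icc (Z + 1) n, μ i
      = ∑ j ∈ ({j : Fin n | (j : ℕ) < Z} : Finset (Fin n))ᶜ, μ (j + 1) := by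
  symm
  refine Finset.sum_bij (fun j _ => (j : ℕ) + 1) (fun j hj => ?_) (fun _ _ _ _ h => ?_)
    (fun i hi => ?_) (fun _ _ => rfl)
  · simp only [Finset.mem_compl, Finset.mem_filter, Finset.mem_univ, true_and] at hj
    simp only [Finset.mem_Icc]; omega
  · exact Fin.ext (by simpa using h)
  · simp only [Finset.mem_Icc] at hi
    exact ⟨⟨i - 1, by omega⟩, by simp; omega, by simp; omega⟩

theorem range_toLin'_transpose_eq_span {n Z : ℕ} (hZn : Z ≤ n) {u : Fin n → Fin n → ℝ}
    (horth : ∀ i j, u i ⬝ᵥ u j = if i = j then 1 else 0) {L : Matrix (Fin n) (Fin n) ℝ}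
    (hL : IsUnit L) (E : Matrix (Fin Z) (Fin n) ℝ)
    (hmem : ∀ j : Fin n, (j : ℕ) < Z → ∃ y, y ᵥ* (E * L) = u j) :
    LinearMap.range (Matrix.toLin' Eᵀ) =
      Submodule.span ℝ ((fun i : Fin n => (Lᵀ)⁻¹ *ᵥ u i) '' {i : Fin n | (i : ℕ) < Z}) := by
  have hrow : ∀ i, (Lᵀ)⁻¹ *ᵥ u i = (Matrix.of u * L⁻¹).row i := fun i => by
    rw [← transpose_nonsing_inv, mulVec_transpose]; rfl
  simp_rw [hrow, Set.image_eq_range]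
  refine Submodule.eq_span_range_of_linearIndependent ?_ (fun ⟨j, hj⟩ => ?_) ?_
  · have hU : IsUnit (Matrix.of u) :=
      .of_mul_eq_one _ (mul_transpose_eq_one_of_orthonormal_rows horth)
    exact (linearIndependent_rows_of_isUnit (hU.mul (isUnit_nonsing_inv_iff.mpr hL))).comp _
      Subtype.val_injective
  · obtain ⟨y, hy⟩ := hmem j hj
    refine ⟨y, ?_⟩
    change Eᵀ *ᵥ y = u j ᵥ* L⁻¹
    rw [mulVec_transpose, ← hy, vecMul_vecMul, Matrix.mul_assoc,
      mul_nonsing_inv _ ((isUnit_iff_isUnit_det L).mp hL), Matrix.mul_one]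
  · rw [Fintype.card_ofFinset]
    simpa [Fin.card_filter_val_lt, hZn] using LinearMap.finrank_range_le (toLin' Eᵀ)

theorem task_aware_pca_optimal_encoder_general
    (n m Z : ℕ) (hZn : Z ≤ n)
    (Ψ L : Matrix (Fin n) (Fin n) ℝ) (hΨ : Ψ.PosDef) (hChol : Ψ = L * Lᵀ)
    (K : Matrix (Fin m) (Fin n) ℝ)
    (μ : ℕ → ℝ) (u : Fin n → (Fin n → ℝ))
    (hdesc : ∀ i : ℕ, 1 ≤ i → i < n → μ (i + 1) ≤ μ i)
    (hzero : μ (n + 1) = 0)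
    (horth : ∀ i j : Fin n, dotProduct (u i) (u j) = if i = j then 1 else 0)
    (heig : ∀ i : Fin n, (Lᵀ * Kᵀ * K * L).mulVec (u i) = μ ((i : ℕ) + 1) • u i)
    (hgap : 0 < μ Z - μ (Z + 1))
    (E : Matrix (Fin Z) (Fin n) ℝ) (D : Matrix (Fin n) (Fin Z) ℝ)
    (hopt : (K * (1 - D * E) * Ψ * (1 - D * E)ᵀ * Kᵀ).trace =
      ∑ i ∈ Finset.Icc (Z + 1) n, μ i) :
    LinearMap.range (Matrix.toLin' Eᵀ) =
      Submodule.span ℝ ((fun i : Fin n => (Lᵀ)⁻¹.mulVec (u i)) ''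
        {i : Fin n | (i : ℕ) < Z}) := by
  have hL : IsUnit L := isUnit_of_mul_isUnit_left (hChol ▸ hΨ.isUnit)
  have hμ : AntitoneOn μ (Set.Icc 1 n) :=
    antitoneOn_of_add_one_le Set.ordConnected_Icc fun i _ hi hi1 => hdesc i hi.1 hi1.2
  have hν (j : Fin n) : 0 ≤ μ (j + 1) := by
    refine PosSemidef.nonneg_of_mulVec_eq_smul ?_ (by simpa using horth j j) (heig j)
    simpa [Matrix.mul_assoc] using posSemidef_conjTranspose_mul_self (K * L)
  have hc : 0 ≤ μ (Z + 1) := by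
    rcases hZn.lt_or_eq with h | rfl
    · exact hν ⟨Z, h⟩
    · exact hzero.ge
  have hX : 1 - L⁻¹ * D * (E * L) = L⁻¹ * (1 - D * E) * L := by
    rw [Matrix.mul_sub, Matrix.sub_mul, Matrix.mul_one,
      nonsing_inv_mul _ ((isUnit_iff_isUnit_det L).mp hL)]
    simp only [Matrix.mul_assoc]
  have hmem := mem_range_vecMul_of_trace_le horth heig hν {j | (j : ℕ) < Z}
    (by simp [Fin.card_filter_val_lt, hZn]) hc (sub_pos.mp hgap)
    (fun j hj => by
      simp only [Finset.mem_filter, Finset.mem_univ, true_and] at hj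
      exact hμ ⟨by omega, by omega⟩ ⟨by omega, hZn⟩ (by omega))
    (fun j hj => by
      simp only [Finset.mem_filter, Finset.mem_univ, true_and] at hj
      exact hμ ⟨by omega, by omega⟩ ⟨by omega, by omega⟩ (by omega))
    (L⁻¹ * D) (E * L)
    (by rw [hX, ← trace_mul_mul_self_mul_transpose_mul K _ hL, ← hChol, hopt,
      sum_Icc_succ_eq_sum_compl])
  exact range_toLin'_transpose_eq_span hZn horth hL E fun j hj => hmem j (by simpa using hj)

/-- task-aware PCA, uniqueness of the optimal encoder: if the
eigen-gap `μ_Z - μ_{Z+1} > 0` and an encoder/decoder pair attains the optimal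
loss `μ_{Z+1} + ⋯ + μ_n`, then the column space of `Eᵀ` equals the span of
`{L⁻ᵀ u₁, …, L⁻ᵀ u_Z}`. -/
theorem task_aware_pca_optimal_encoder
    (n m Z : ℕ) (hn : 0 < n) (hm : 0 < m) (hZ : 0 < Z) (hZn : Z ≤ n)
    (Ψ L : Matrix (Fin n) (Fin n) ℝ) (hΨ : Ψ.PosDef) (hChol : Ψ = L * Lᵀ)
    (hLtri : ∀ i j : Fin n, i < j → L i j = 0) (hLdiag : ∀ i : Fin n, 0 < L i i)
    (K : Matrix (Fin m) (Fin n) ℝ)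
    (μ : ℕ → ℝ) (u : Fin n → (Fin n → ℝ))
    (hdesc : ∀ i : ℕ, 1 ≤ i → i < n → μ (i + 1) ≤ μ i)
    (hzero : μ (n + 1) = 0)
    (horth : ∀ i j : Fin n, dotProduct (u i) (u j) = if i = j then 1 else 0)
    (heig : ∀ i : Fin n, (Lᵀ * Kᵀ * K * L).mulVec (u i) = μ ((i : ℕ) + 1) • u i)
    (hgap : 0 < μ Z - μ (Z + 1))
    (E : Matrix (Fin Z) (Fin n) ℝ) (D : Matrix (Fin n) (Fin Z) ℝ)
    (hopt : (K * (1 - D * E) * Ψ * (1 - D * E)ᵀ * Kᵀ).trace =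
      ∑ i ∈ Finset.Icc (Z + 1) n, μ i) :
    LinearMap.range (Matrix.toLin' Eᵀ) =
      Submodule.span ℝ ((fun i : Fin n => (Lᵀ)⁻¹.mulVec (u i)) ''
        {i : Fin n | (i : ℕ) < Z}) :=
  task_aware_pca_optimal_encoder_general n m Z hZn Ψ L hΨ hChol K μ u hdesc hzero horth heig hgap E
    D hopt
end

section
/- Let E_h = EL and suppose E_h E_hᵀ ∈ ℝ^{Z×Z} is invertible. Set D* = L E_hᵀ (E_h E_hᵀ)^{−1} ∈ ℝ^{n×Z}. Then ℒ(D*, E) = Tr(S) − Tr(S E_hᵀ (E_h E_hᵀ)^{−1} E_h), and for every decoder D ∈ ℝ^{n×Z} one has ℒ(D, E) ≥ Tr(S) − Tr(S E_hᵀ (E_h E_hᵀ)^{−1} E_h); that is, D* minimizes the task-aware compression loss for the fixed encoder E. -/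
open Matrix

lemma trace_mul_transpose_self_nonneg {m n : ℕ} (M : Matrix (Fin m) (Fin n) ℝ) :
    0 ≤ (M * Mᵀ).trace := by
  rw [Matrix.trace]
  apply Finset.sum_nonneg
  intro i _
  rw [Matrix.diag_apply, Matrix.mul_apply]
  apply Finset.sum_nonneg
  intro j _
  simpa [Matrix.transpose_apply] using mul_self_nonneg (M i j)

lemma sq_decomp {m n : ℕ} (A X : Matrix (Fin m) (Fin n) ℝ)
    (P : Matrix (Fin n) (Fin n) ℝ)
    (hPsym : Pᵀ = P) (hPP : P * P = P) (hXP : X * P = X) :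
    (A - X) * (A - X)ᵀ = A * Aᵀ - A * P * Aᵀ + (A * P - X) * (A * P - X)ᵀ := by
  have hPXt : P * Xᵀ = Xᵀ := by
    have h := congrArg Matrix.transpose hXP
    simpa [Matrix.transpose_mul, hPsym] using h
  have e1 : A * P * (P * Aᵀ) = A * P * Aᵀ := by
    rw [← Matrix.mul_assoc, Matrix.mul_assoc A P P, hPP]
  have e2 : A * P * Xᵀ = A * Xᵀ := by rw [Matrix.mul_assoc, hPXt]
  have e3 : X * (P * Aᵀ) = X * Aᵀ := by rw [← Matrix.mul_assoc, hXP]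
  simp only [Matrix.transpose_sub, Matrix.transpose_mul, hPsym,
    Matrix.mul_sub, Matrix.sub_mul]
  rw [e1, e2, e3]
  abel

/-- optimal decoder for a fixed encoder: with `E_h = E L` and
`E_h E_hᵀ` invertible, the decoder `D* = L E_hᵀ (E_h E_hᵀ)⁻¹` attains loss
`Tr S - Tr (S E_hᵀ (E_h E_hᵀ)⁻¹ E_h)`, and every decoder has at least this
loss. -/
theorem optimal_decoder_for_fixed_encoder
    (n m Z : ℕ) (hn : 0 < n) (hm : 0 < m) (hZ : 0 < Z) (hZn : Z ≤ n)
    (Ψ L : Matrix (Fin n) (Fin n) ℝ) (hΨ : Ψ.PosDef) (hChol : Ψ = L * Lᵀ)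
    (hLtri : ∀ i j : Fin n, i < j → L i j = 0) (hLdiag : ∀ i : Fin n, 0 < L i i)
    (K : Matrix (Fin m) (Fin n) ℝ)
    (E : Matrix (Fin Z) (Fin n) ℝ)
    (hinv : IsUnit ((E * L) * (E * L)ᵀ)) :
    (K * (1 - (L * (E * L)ᵀ * ((E * L) * (E * L)ᵀ)⁻¹) * E) * Ψ *
        (1 - (L * (E * L)ᵀ * ((E * L) * (E * L)ᵀ)⁻¹) * E)ᵀ * Kᵀ).trace =
      (Lᵀ * Kᵀ * K * L).trace -
        (Lᵀ * Kᵀ * K * L * (E * L)ᵀ * ((E * L) * (E * L)ᵀ)⁻¹ * (E * L)).trace ∧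
    ∀ D : Matrix (Fin n) (Fin Z) ℝ,
      (K * (1 - D * E) * Ψ * (1 - D * E)ᵀ * Kᵀ).trace ≥
        (Lᵀ * Kᵀ * K * L).trace -
          (Lᵀ * Kᵀ * K * L * (E * L)ᵀ * ((E * L) * (E * L)ᵀ)⁻¹ * (E * L)).trace := by
  set Eh := E * L with hEhdef
  set G := Eh * Ehᵀ with hGdef
  have hdet : IsUnit G.det := (Matrix.isUnit_iff_isUnit_det G).mp hinv
  have hGinv : G * G⁻¹ = 1 := Matrix.mul_nonsing_inv G hdet
  have hinvG : G⁻¹ * G = 1 := Matrix.nonsing_inv_mul G hdet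
  have hGsym : Gᵀ = G := by
    rw [hGdef, Matrix.transpose_mul, Matrix.transpose_transpose]
  have hGinvsym : (G⁻¹)ᵀ = G⁻¹ := by
    rw [Matrix.transpose_nonsing_inv, hGsym]
  set A := K * L with hA
  set P := Ehᵀ * G⁻¹ * Eh with hP
  have hPsym : Pᵀ = P := by
    rw [hP]
    simp [Matrix.transpose_mul, hGinvsym, Matrix.mul_assoc]
  have hEhP : Eh * P = Eh := by
    rw [hP]
    simp only [← Matrix.mul_assoc]
    rw [← hGdef, hGinv, Matrix.one_mul]
  have hPP : P * P = P := by
    rw [hP]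
    have h1 : Ehᵀ * G⁻¹ * Eh * (Ehᵀ * G⁻¹ * Eh)
        = Ehᵀ * G⁻¹ * (Eh * Ehᵀ) * (G⁻¹ * Eh) := by
      simp only [Matrix.mul_assoc]
    rw [h1, ← hGdef, Matrix.mul_assoc Ehᵀ G⁻¹ G, hinvG, Matrix.mul_one,
      ← Matrix.mul_assoc]
  -- general formula for the loss of any decoder
  have key : ∀ D : Matrix (Fin n) (Fin Z) ℝ,
      (K * (1 - D * E) * Ψ * (1 - D * E)ᵀ * Kᵀ).trace
        = (Lᵀ * Kᵀ * K * L).trace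
            - (Lᵀ * Kᵀ * K * L * Ehᵀ * G⁻¹ * Eh).trace
            + ((A * P - K * D * Eh) * (A * P - K * D * Eh)ᵀ).trace := by
    intro D
    have hXP : (K * D * Eh) * P = K * D * Eh := by
      rw [Matrix.mul_assoc (K * D) Eh P, hEhP]
    have hB : K * (1 - D * E) * L = A - K * D * Eh := by
      rw [hA, hEhdef]
      simp only [Matrix.mul_sub, Matrix.sub_mul, Matrix.mul_one, Matrix.mul_assoc]
    have hloss : K * (1 - D * E) * Ψ * (1 - D * E)ᵀ * Kᵀ
        = (K * (1 - D * E) * L) * (K * (1 - D * E) * L)ᵀ := by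
      rw [hChol]
      simp only [Matrix.transpose_mul, Matrix.mul_assoc]
    rw [hloss, hB, sq_decomp A (K * D * Eh) P hPsym hPP hXP]
    rw [Matrix.trace_add, Matrix.trace_sub]
    congr 2
    · rw [hA, Matrix.transpose_mul, Matrix.trace_mul_comm]
      simp only [Matrix.mul_assoc]
    · rw [Matrix.trace_mul_comm (A * P) Aᵀ, hA, hP, Matrix.transpose_mul]
      simp only [Matrix.mul_assoc]
  constructor
  · rw [key (L * Ehᵀ * G⁻¹)]
    have hM : A * P - K * (L * Ehᵀ * G⁻¹) * Eh = 0 := by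
      rw [sub_eq_zero, hA, hP]
      simp only [Matrix.mul_assoc]
    rw [hM]
    simp
  · intro D
    rw [key D]
    have := trace_mul_transpose_self_nonneg ((A * P - K * D * Eh))
    linarith
end

section
/- Let Ψ ∈ ℝ^{n×n} be symmetric positive semidefinite of rank ñ, with spectral decomposition Ψ = Q Λ Qᵀ where Q ∈ ℝ^{n×ñ} has orthonormal columns and Λ ∈ ℝ^{ñ×ñ} is diagonal with positive diagonal entries. Let K ∈ ℝ^{m×n} and set K̃ = K Q Λ^{1/2} ∈ ℝ^{m×ñ}. Then the infimum over D ∈ ℝ^{n×Z}, E ∈ ℝ^{Z×n} of Tr(K(I − DE) Ψ (I − DE)ᵀ Kᵀ) equals the infimum over D̃ ∈ ℝ^{ñ×Z}, Ẽ ∈ ℝ^{Z×ñ} of Tr(K̃(I − D̃Ẽ)(I − D̃Ẽ)ᵀ K̃ᵀ). -/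
/-!
Write `Ψ = W Wᵀ` with `W = Q Λ^{1/2}`, so that `K̃ = K W` and the loss of `(D, E)` is the squared
Frobenius norm of `K (I - D E) W = K̃ - (K D)(E W)`. Every whitened pair `(D̃, Ẽ)` is realised by
`D = W D̃`, `E = Ẽ Λ^{-1/2} Qᵀ`, since `E W = Ẽ`. Conversely, given `(D, E)`, put `Ẽ = E W` and
project the columns of `K D` orthogonally onto the column space of `K̃`: writing the projection as
`K̃ X`, the choice `D̃ = X K D` gives `K̃ - K̃ D̃ Ẽ`, and by Pythagoras this is no farther from `K̃`
than `K̃ - (K D) Ẽ`.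
-/

open Matrix

namespace Matrix

theorem trace_mul_transpose_self_nonneg {m n : Type*} [Fintype m] [Fintype n]
    (A : Matrix m n ℝ) : 0 ≤ (A * Aᵀ).trace := by
  simpa [conjTranspose_eq_transpose_of_trivial] using
    (posSemidef_self_mul_conjTranspose A).trace_nonneg

theorem trace_add_mul_transpose_add_of_transpose_mul_eq_zero {m n : Type*} [Fintype m]
    [Fintype n] {B M : Matrix m n ℝ} (h : Bᵀ * M = 0) :
    ((B + M) * (B + M)ᵀ).trace = (B * Bᵀ).trace + (M * Mᵀ).trace := by
  have hMB : (M * Bᵀ).trace = 0 := by rw [trace_mul_comm, h, trace_zero]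
  have hBM : (B * Mᵀ).trace = 0 := by
    rw [← trace_transpose, transpose_mul, transpose_transpose, hMB]
  rw [transpose_add, Matrix.add_mul, Matrix.mul_add, Matrix.mul_add]
  simp only [trace_add, hMB, hBM]
  ring

theorem trace_sub_mul_mul_transpose_le {m n : Type*} [Fintype m] [DecidableEq m] [Fintype n]
    {A : Matrix m n ℝ} {P : Matrix m m ℝ} (hP : Pᵀ = P) (hPP : P * P = P) (hPA : P * A = A)
    (Y : Matrix m n ℝ) :
    ((A - P * Y) * (A - P * Y)ᵀ).trace ≤ ((A - Y) * (A - Y)ᵀ).trace := by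
  have horth : (A - P * Y)ᵀ * ((P - 1) * Y) = 0 := by
    have : (P - 1) * (A - P * Y) = 0 := by
      rw [Matrix.mul_sub, Matrix.sub_mul, Matrix.sub_mul, ← Matrix.mul_assoc, hPP, hPA]
      simp
    rw [← Matrix.mul_assoc, ← transpose_transpose (P - 1), ← transpose_mul, transpose_sub,
      transpose_one, hP, this, transpose_zero, Matrix.zero_mul]
  have hsplit : A - Y = (A - P * Y) + (P - 1) * Y := by
    rw [Matrix.sub_mul, Matrix.one_mul]; abel
  rw [hsplit, trace_add_mul_transpose_add_of_transpose_mul_eq_zero horth]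
  linarith [trace_mul_transpose_self_nonneg ((P - 1) * Y)]

/-- `A * X` is the orthogonal projection onto the column space of `A`. -/
theorem exists_mul_mul_eq_self_and_transpose_mul_eq_mul {m n : Type*} [Fintype m]
    [DecidableEq m] [Fintype n] [DecidableEq n] (A : Matrix m n ℝ) :
    ∃ X : Matrix n m ℝ, A * X * A = A ∧ (A * X)ᵀ = A * X := by
  let U := LinearMap.range (toEuclideanLin A)
  obtain ⟨R, hR⟩ := (toEuclideanLin A).rangeRestrict.exists_rightInverse_of_surjective
    (toEuclideanLin A).range_rangeRestrict
  let X := toEuclideanLin.symm (R ∘ₗ U.orthogonalProjectionOnto.toLinearMap)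
  have hAX : toEuclideanLin (A * X) = U.starProjection.toLinearMap := by
    rw [toLpLin_mul (q := 2), LinearEquiv.apply_symm_apply]
    ext x : 1
    exact congr(Subtype.val ($hR (U.orthogonalProjectionOnto x)))
  refine ⟨X, toEuclideanLin.injective ?_, ?_⟩
  · rw [toLpLin_mul (q := 2), hAX]
    ext x : 1
    exact Submodule.starProjection_eq_self_iff.mpr (LinearMap.mem_range_self _ x)
  · have := isSymmetric_toEuclideanLin_iff.mp (hAX ▸ U.starProjection_isSymmetric)
    simpa [IsHermitian, conjTranspose_eq_transpose_of_trivial] using this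

theorem exists_trace_mul_one_sub_mul_le {m n z : Type*} [Fintype m] [DecidableEq m]
    [Fintype n] [DecidableEq n] [Fintype z] (A : Matrix m n ℝ) (C : Matrix m z ℝ)
    (E : Matrix z n ℝ) :
    ∃ D : Matrix n z ℝ, ((A * (1 - D * E)) * (A * (1 - D * E))ᵀ).trace ≤
      ((A - C * E) * (A - C * E)ᵀ).trace := by
  obtain ⟨X, hA, hAX⟩ := A.exists_mul_mul_eq_self_and_transpose_mul_eq_mul
  have hPP : A * X * (A * X) = A * X := by rw [← Matrix.mul_assoc, hA]
  refine ⟨X * C, ?_⟩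
  rw [Matrix.mul_sub, Matrix.mul_one, ← Matrix.mul_assoc, ← Matrix.mul_assoc, Matrix.mul_assoc]
  exact trace_sub_mul_mul_transpose_le hAX hPP hA (C * E)

theorem mul_diagonal_mul_transpose_eq_mul_transpose_of_nonneg {m n : Type*} [Fintype n]
    [DecidableEq n] (Q : Matrix m n ℝ) {d : n → ℝ} (hd : ∀ i, 0 ≤ d i) :
    Q * diagonal d * Qᵀ =
      (Q * diagonal fun i => √(d i)) * (Q * diagonal fun i => √(d i))ᵀ := by
  have hsqrt : (diagonal fun i => √(d i)) * (diagonal fun i => √(d i)) = diagonal d := by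
    simp [diagonal_mul_diagonal, Real.mul_self_sqrt (hd _)]
  rw [transpose_mul, diagonal_transpose, ← hsqrt]
  simp only [Matrix.mul_assoc]

theorem mul_diagonal_inv_mul_transpose_mul_mul_diagonal {l m n : Type*} [Fintype m]
    [Fintype n] [DecidableEq n] {Q : Matrix m n ℝ} (hQ : Qᵀ * Q = 1) {s : n → ℝ}
    (hs : ∀ i, s i ≠ 0) (E : Matrix l n ℝ) :
    E * diagonal s⁻¹ * Qᵀ * (Q * diagonal s) = E := by
  simp [Matrix.mul_assoc, ← Matrix.mul_assoc Qᵀ, hQ, diagonal_mul_diagonal, hs]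

end Matrix

theorem whitened_compression_loss_infimum_general
    (n m Z nt : ℕ)
    (Ψ : Matrix (Fin n) (Fin n) ℝ)
    (Q : Matrix (Fin n) (Fin nt) ℝ) (hQ : Qᵀ * Q = 1)
    (d : Fin nt → ℝ) (hd : ∀ i, 0 < d i)
    (hdecomp : Ψ = Q * Matrix.diagonal d * Qᵀ)
    (K : Matrix (Fin m) (Fin n) ℝ) :
    sInf {l : ℝ | ∃ (D : Matrix (Fin n) (Fin Z) ℝ) (E : Matrix (Fin Z) (Fin n) ℝ),
        l = (K * (1 - D * E) * Ψ * (1 - D * E)ᵀ * Kᵀ).trace} =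
      sInf {l : ℝ | ∃ (D' : Matrix (Fin nt) (Fin Z) ℝ) (E' : Matrix (Fin Z) (Fin nt) ℝ),
        l = ((K * Q * Matrix.diagonal fun i => Real.sqrt (d i)) * (1 - D' * E') *
              (1 - D' * E')ᵀ *
              (K * Q * Matrix.diagonal fun i => Real.sqrt (d i))ᵀ).trace} := by
  set s : Fin nt → ℝ := fun i => √(d i)
  set W := Q * diagonal s
  have hΨ : Ψ = W * Wᵀ :=
    hdecomp.trans (mul_diagonal_mul_transpose_eq_mul_transpose_of_nonneg Q fun i => (hd i).le)
  have hloss (D : Matrix (Fin n) (Fin Z) ℝ) (E : Matrix (Fin Z) (Fin n) ℝ) :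
      K * (1 - D * E) * Ψ * (1 - D * E)ᵀ * Kᵀ =
        (K * W - K * D * (E * W)) * (K * W - K * D * (E * W))ᵀ := by
    rw [show K * W - K * D * (E * W) = K * (1 - D * E) * W by
      simp [Matrix.mul_sub, Matrix.sub_mul, Matrix.mul_assoc], hΨ]
    simp only [transpose_mul, Matrix.mul_assoc]
  have hwhitened (D' : Matrix (Fin nt) (Fin Z) ℝ) (E' : Matrix (Fin Z) (Fin nt) ℝ) :
      K * Q * diagonal s * (1 - D' * E') * (1 - D' * E')ᵀ * (K * Q * diagonal s)ᵀ =
        (K * W * (1 - D' * E')) * (K * W * (1 - D' * E'))ᵀ := by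
    simp [W, transpose_mul, Matrix.mul_assoc]
  apply csInf_eq_csInf_of_forall_exists_le
  · rintro _ ⟨D, E, rfl⟩
    obtain ⟨D', hD'⟩ := (K * W).exists_trace_mul_one_sub_mul_le (K * D) (E * W)
    exact ⟨_, ⟨D', E * W, rfl⟩, by rwa [hloss, hwhitened]⟩
  · rintro _ ⟨D', E', rfl⟩
    refine ⟨_, ⟨W * D', E' * diagonal s⁻¹ * Qᵀ, rfl⟩, le_of_eq ?_⟩
    rw [hloss, hwhitened, mul_diagonal_inv_mul_transpose_mul_mul_diagonal hQ
      (fun i => (Real.sqrt_pos.mpr (hd i)).ne'), Matrix.mul_sub, Matrix.mul_one,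
      ← Matrix.mul_assoc K W D', ← Matrix.mul_assoc (K * W) D' E']

/-- whitening / reduction to full-rank covariance: for
`Ψ = Q Λ Qᵀ` psd of rank `nt` with `Q` having orthonormal columns and `Λ`
diagonal with positive entries, and `K̃ = K Q Λ^{1/2}`, the infimum of the
compression loss with covariance `Ψ` over `D ∈ ℝ^{n×Z}, E ∈ ℝ^{Z×n}` equals
the infimum of the whitened loss over `D̃ ∈ ℝ^{nt×Z}, Ẽ ∈ ℝ^{Z×nt}`. -/
theorem whitened_compression_loss_infimum
    (n m Z nt : ℕ) (hn : 0 < n) (hm : 0 < m) (hZ : 0 < Z) (hnt : 0 < nt)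
    (hZn : Z ≤ n) (hntn : nt ≤ n)
    (Ψ : Matrix (Fin n) (Fin n) ℝ) (hΨ : Ψ.PosSemidef)
    (hrank : Ψ.rank = nt)
    (Q : Matrix (Fin n) (Fin nt) ℝ) (hQ : Qᵀ * Q = 1)
    (d : Fin nt → ℝ) (hd : ∀ i, 0 < d i)
    (hdecomp : Ψ = Q * Matrix.diagonal d * Qᵀ)
    (K : Matrix (Fin m) (Fin n) ℝ) :
    sInf {l : ℝ | ∃ (D : Matrix (Fin n) (Fin Z) ℝ) (E : Matrix (Fin Z) (Fin n) ℝ),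
        l = (K * (1 - D * E) * Ψ * (1 - D * E)ᵀ * Kᵀ).trace} =
      sInf {l : ℝ | ∃ (D' : Matrix (Fin nt) (Fin Z) ℝ) (E' : Matrix (Fin Z) (Fin nt) ℝ),
        l = ((K * Q * Matrix.diagonal fun i => Real.sqrt (d i)) * (1 - D' * E') *
              (1 - D' * E')ᵀ *
              (K * Q * Matrix.diagonal fun i => Real.sqrt (d i))ᵀ).trace} :=
  whitened_compression_loss_infimum_general n m Z nt Ψ Q hQ d hd hdecomp K
end
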